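/- arXiv:2301.11377 — 4 statements merged into one kernel-verified Lean document; each statement's English description precedes it below -/
import Mathlib

section
/- The momentum operator 𝖣 is symmetric, and its adjoint 𝖣* is given as follows: a function g ∈ L²(Ω) belongs to the domain of 𝖣* if and only if g has a representative in 𝒟_max, and in that case 𝖣*g = (1/(2πi)) g′. -/
open MeasureTheory Complex Filter Set intervalIntegral
open scoped ContDiff

noncomputable section

/-- The union of the open intervals `(a i, b i)`. -/
def Omega {n : ℕ} (a b : Fin n → ℝ) : Set ℝ := ⋃ i, Set.Ioo (a i) (b i)

/-- The endpoints are ordered: `a 0 < b 0 < a 1 < b 1 < … < a (n-1) < b (n-1)`. -/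
def EndpointsOrdered {n : ℕ} (a b : Fin n → ℝ) : Prop :=
  (∀ i, a i < b i) ∧ ∀ i j : Fin n, i < j → b i < a j

/-- The constant `1 / (2 π i)`. -/
def mK : ℂ := 1 / (2 * (Real.pi : ℂ) * Complex.I)

/-- Smooth functions, compactly supported inside `Ω` (extended by zero to `ℝ`). -/
def IsCcSmooth {n : ℕ} (a b : Fin n → ℝ) (f : ℝ → ℂ) : Prop :=
  ContDiff ℝ ((⊤ : ℕ∞) : WithTop ℕ∞) f ∧ HasCompactSupport f ∧ tsupport f ⊆ Omega a b

/-- `f` is a member of `𝒟_max`: it is absolutely continuous on each interval `(a i, b i)`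
with a.e. derivative `g ∈ L²(Ω)` (expressed by the fundamental theorem of calculus on each
interval), and with boundary values `va i` at `a i` and `vb i` at `b i`. -/
structure MemDmax {n : ℕ} (a b : Fin n → ℝ) (f g : ℝ → ℂ) (va vb : Fin n → ℂ) : Prop where
  memL2 : MemLp f 2 (volume.restrict (Omega a b))
  derivL2 : MemLp g 2 (volume.restrict (Omega a b))
  ftc : ∀ i : Fin n, ∀ x ∈ Set.Ioo (a i) (b i), ∀ y ∈ Set.Ioo (a i) (b i),
    f y - f x = ∫ t in x..y, g t
  lim_left : ∀ i : Fin n,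
    Filter.Tendsto f (nhdsWithin (a i) (Set.Ioo (a i) (b i))) (nhds (va i))
  lim_right : ∀ i : Fin n,
    Filter.Tendsto f (nhdsWithin (b i) (Set.Ioo (a i) (b i))) (nhds (vb i))

/-- The inner product on `ℂⁿ`, linear in the first argument. -/
def cdot {n : ℕ} (u v : Fin n → ℂ) : ℂ := ∑ i, u i * star (v i)

/-- The exponential function `e_λ(x) = e^{2πiλx}`. -/
def eFun (l : ℝ) : ℝ → ℂ := fun x => Complex.exp (2 * (Real.pi : ℂ) * Complex.I * l * x)

/-- The diagonal matrix `E(z)` with entries `e^{2πi z j}`. -/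
def expDiag {n : ℕ} (z : Fin n → ℂ) : Matrix (Fin n) (Fin n) ℂ :=
  Matrix.diagonal fun i => Complex.exp (2 * (Real.pi : ℂ) * Complex.I * z i)

/-- `B` is a spectral boundary matrix: for every real `λ`, any solution `c` of
`B E(λ a⃗) c = E(λ b⃗) c` is a scalar multiple of `(1,…,1)`. -/
def IsSpectralBoundary {n : ℕ} (a b : Fin n → ℝ) (B : Matrix (Fin n) (Fin n) ℂ) : Prop :=
  ∀ (l : ℝ) (c : Fin n → ℂ),
    B.mulVec ((expDiag fun i => (l : ℂ) * (a i)).mulVec c)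
      = (expDiag fun i => (l : ℂ) * (b i)).mulVec c →
    ∃ t : ℂ, c = fun _ => t

/-- `B` restricts to a linear isometric isomorphism from `Bl` onto `Br` and vanishes
on the orthogonal complement of `Bl` (a partial isometry with initial space `Bl` and
final space `Br`). -/
def IsPartialIsometryOn {n : ℕ} (B : Matrix (Fin n) (Fin n) ℂ)
    (Bl Br : Submodule ℂ (Fin n → ℂ)) : Prop :=
  (∀ v ∈ Bl, cdot (B.mulVec v) (B.mulVec v) = cdot v v) ∧
  Submodule.map B.mulVecLin Bl = Br ∧
  (∀ v : Fin n → ℂ, (∀ u ∈ Bl, cdot v u = 0) → B.mulVec v = 0)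

/-- `Ω` is spectral with spectrum `Λ`: the exponentials `e_λ`, `λ ∈ Λ`, are pairwise
orthogonal in `L²(Ω)` and their closed linear span is all of `L²(Ω)`. -/
def IsSpectral {n : ℕ} (a b : Fin n → ℝ) (Λ : Set ℝ) : Prop :=
  (∀ l ∈ Λ, ∀ l' ∈ Λ, l ≠ l' →
      ∫ x in Omega a b, eFun l x * star (eFun l' x) = 0) ∧
  (Submodule.span ℂ {F : Lp ℂ 2 (volume.restrict (Omega a b)) |
      ∃ l ∈ Λ, ⇑F =ᵐ[volume.restrict (Omega a b)] eFun l}).topologicalClosure = ⊤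


lemma mK0 : (2 * (Real.pi : ℂ) * Complex.I) ≠ 0 := by
  simp [Real.pi_ne_zero, Complex.I_ne_zero, Complex.ofReal_eq_zero]

lemma mK_ne : mK ≠ 0 := by
  simp [mK, mK0, Real.pi_ne_zero]

lemma conj_mK : (starRingEnd ℂ) mK = -mK := by
  simp only [mK, map_div₀, map_mul, map_one, map_ofNat, Complex.conj_ofReal, Complex.conj_I]
  ring

lemma integrable_star {α : Type*} [MeasurableSpace α] {μ : Measure α} {f : α → ℂ}
    (hf : Integrable f μ) : Integrable (fun x => star (f x)) μ := by
  refine Integrable.mono' hf.norm (continuous_star.comp_aestronglyMeasurable hf.1) ?_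
  filter_upwards with x
  simp

lemma bound_of_cts {f : ℝ → ℂ} (hf : Continuous f) (hfc : HasCompactSupport f) :
    ∃ C, ∀ x, ‖f x‖ ≤ C := hfc.exists_bound_of_continuous hf

lemma ibp_Ioo {c d : ℝ} (hcd : c < d) {f u v : ℝ → ℂ}
    (hf : ContDiff ℝ ∞ f) (hfc : HasCompactSupport f)
    (hfs : tsupport f ∩ Set.Icc c d ⊆ Set.Ioo c d)
    (hu : IntegrableOn u (Set.Ioo c d))
    (hv : IntegrableOn v (Set.Ioo c d))
    (ftc : ∀ x ∈ Set.Ioo c d, ∀ y ∈ Set.Ioo c d, u y - u x = ∫ t in x..y, v t) :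
    ∫ x in Set.Ioo c d, deriv f x * u x = -∫ x in Set.Ioo c d, f x * v x := by
  have hfco : Continuous f := hf.continuous
  have hle : (1 : WithTop ℕ∞) ≤ ∞ := by exact_mod_cast (le_top : (1:ℕ∞) ≤ ⊤)
  have hf' : Continuous (deriv f) := hf.continuous_deriv hle
  have hK : IsCompact (tsupport f ∩ Set.Icc c d) := hfc.inter_right isClosed_Icc
  rcases (tsupport f ∩ Set.Icc c d).eq_empty_or_nonempty with hKe | hKne
  · have h0 : ∀ t ∈ Set.Ioo c d, f t = 0 ∧ deriv f t = 0 := by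
      intro t ht
      constructor
      · by_contra h
        exact absurd hKe (Set.nonempty_iff_ne_empty.mp
          ⟨t, subset_tsupport f h, Set.Ioo_subset_Icc_self ht⟩)
      · by_contra h
        exact absurd hKe (Set.nonempty_iff_ne_empty.mp
          ⟨t, support_deriv_subset h, Set.Ioo_subset_Icc_self ht⟩)
    have h1 : ∫ x in Set.Ioo c d, deriv f x * u x = 0 := by
      rw [setIntegral_congr_fun measurableSet_Ioo (g := fun _ => (0:ℂ))
        (fun t ht => by simp [(h0 t ht).2])]; simp
    have h2 : ∫ x in Set.Ioo c d, f x * v x = 0 := by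
      rw [setIntegral_congr_fun measurableSet_Ioo (g := fun _ => (0:ℂ))
        (fun t ht => by simp [(h0 t ht).1])]; simp
    rw [h1, h2]; simp
  · set K := tsupport f ∩ Set.Icc c d with hKdef
    have hKsub : K ⊆ Set.Ioo c d := hfs
    set p := sInf K with hp
    set q := sSup K with hq
    have hpK : p ∈ K := hK.sInf_mem hKne
    have hqK : q ∈ K := hK.sSup_mem hKne
    have hpmem : p ∈ Set.Ioo c d := hKsub hpK
    have hqmem : q ∈ Set.Ioo c d := hKsub hqK
    set x0 := (c + p) / 2 with hx0def
    set y0 := (q + d) / 2 with hy0def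
    have hcx0 : c < x0 := by simp only [hx0def]; linarith [hpmem.1]
    have hx0p : x0 < p := by simp only [hx0def]; linarith [hpmem.1]
    have hqy0 : q < y0 := by simp only [hy0def]; linarith [hqmem.2]
    have hy0d : y0 < d := by simp only [hy0def]; linarith [hqmem.2]
    have hpq : p ≤ q := csInf_le_csSup hKne hK.bddBelow hK.bddAbove
    have hx0y0 : x0 ≤ y0 := by linarith
    have hx0mem : x0 ∈ Set.Ioo c d := ⟨hcx0, by linarith [hqmem.2]⟩
    have hy0mem : y0 ∈ Set.Ioo c d := ⟨by linarith [hpmem.1], hy0d⟩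
    have hIocsub : Set.Ioc x0 y0 ⊆ Set.Ioo c d :=
      fun t ht => ⟨lt_trans hcx0 ht.1, lt_of_le_of_lt ht.2 hy0d⟩
    have hIccsub : Set.Icc x0 y0 ⊆ Set.Ioo c d :=
      fun t ht => ⟨lt_of_lt_of_le hcx0 ht.1, lt_of_le_of_lt ht.2 hy0d⟩
    -- vanishing of f and deriv f off [p,q]
    have hvan : ∀ t, t ∈ Set.Icc c d → t ∉ Set.Icc p q → f t = 0 ∧ deriv f t = 0 := by
      intro t htcd htpq
      constructor
      · by_contra h
        exact htpq ⟨csInf_le hK.bddBelow ⟨subset_tsupport f h, htcd⟩,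
          le_csSup hK.bddAbove ⟨subset_tsupport f h, htcd⟩⟩
      · by_contra h
        exact htpq ⟨csInf_le hK.bddBelow ⟨support_deriv_subset h, htcd⟩,
          le_csSup hK.bddAbove ⟨support_deriv_subset h, htcd⟩⟩
    -- bounds
    obtain ⟨C1, hC1⟩ := hfc.exists_bound_of_continuous hfco
    obtain ⟨C2, hC2⟩ := (hfc.deriv).exists_bound_of_continuous hf'
    have hFu_int : IntegrableOn (fun x => deriv f x * u x) (Set.Ioo c d) :=
      hu.bdd_mul hf'.aestronglyMeasurable (Filter.Eventually.of_forall hC2)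
    have hFv_int : IntegrableOn (fun x => f x * v x) (Set.Ioo c d) :=
      hv.bdd_mul hfco.aestronglyMeasurable (Filter.Eventually.of_forall hC1)
    -- reduction to Ioc x0 y0
    have reduce : ∀ F : ℝ → ℂ, IntegrableOn F (Set.Ioo c d) →
        (∀ t ∈ Set.Ioo c d, t ∉ Set.Ioc x0 y0 → F t = 0) →
        ∫ x in Set.Ioo c d, F x = ∫ x in Set.Ioc x0 y0, F x := by
      intro F hFi hF0
      have hsplit : Set.Ioo c d = Set.Ioc x0 y0 ∪ (Set.Ioo c d \ Set.Ioc x0 y0) :=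
        (Set.union_diff_cancel hIocsub).symm
      rw [hsplit, setIntegral_union disjoint_sdiff_self_right
        (measurableSet_Ioo.diff measurableSet_Ioc)
        (hFi.mono_set hIocsub) (hFi.mono_set Set.diff_subset)]
      rw [setIntegral_congr_fun (measurableSet_Ioo.diff measurableSet_Ioc)
        (g := fun _ => (0:ℂ)) (fun t ht => by simp [hF0 t ht.1 ht.2])]
      simp
    have hvan' : ∀ t ∈ Set.Ioo c d, t ∉ Set.Ioc x0 y0 → f t = 0 ∧ deriv f t = 0 := by
      intro t ht hnt
      refine hvan t (Set.Ioo_subset_Icc_self ht) ?_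
      intro htpq
      rcases not_and_or.mp hnt with h | h
      · push_neg at h; exact absurd htpq.1 (by linarith)
      · push_neg at h; exact absurd htpq.2 (by linarith)
    rw [reduce _ hFu_int (fun t ht hnt => by rw [(hvan' t ht hnt).2, zero_mul]),
      reduce _ hFv_int (fun t ht hnt => by rw [(hvan' t ht hnt).1, zero_mul])]

    -- now on Ioc x0 y0
    have hfx0 : f x0 = 0 :=
      (hvan x0 ⟨hcx0.le, hx0mem.2.le⟩ (fun h => absurd h.1 (by linarith))).1
    have hfy0 : f y0 = 0 :=
      (hvan y0 ⟨hy0mem.1.le, hy0d.le⟩ (fun h => absurd h.2 (by linarith))).1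
    have hdiff : ∀ x ∈ Set.uIcc x0 y0, DifferentiableAt ℝ f x :=
      fun x _ => (hf.differentiable (zero_lt_one.trans_le hle).ne').differentiableAt
    have hintf' : ∀ s t : ℝ, IntervalIntegrable (deriv f) volume s t :=
      fun s t => hf'.intervalIntegrable s t
    have hftc0 : ∀ s ∈ Set.Icc x0 y0, ∫ t in s..y0, deriv f t = - f s := by
      intro s hs
      rw [integral_deriv_eq_sub (fun x _ => (hf.differentiable (zero_lt_one.trans_le hle).ne').differentiableAt)
        (hintf' s y0), hfy0, zero_sub]
    -- the primitive V
    set V : ℝ → ℂ := fun t => ∫ s in x0..t, v s with hVdef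
    have hvI : IntegrableOn v (Set.uIcc x0 y0) := by
      rw [Set.uIcc_of_le hx0y0]
      exact hv.mono_set hIccsub
    have hVcont : ContinuousOn V (Set.Icc x0 y0) := by
      have := continuousOn_primitive_interval (a := x0) (b := y0) (f := v) (μ := volume) hvI
      rwa [Set.uIcc_of_le hx0y0] at this
    -- rewrite u on Ioc
    have hurep : ∀ t ∈ Set.Ioc x0 y0, deriv f t * u t = deriv f t * u x0 + deriv f t * V t := by
      intro t ht
      have : u t - u x0 = V t := ftc x0 hx0mem t (hIocsub ht)
      have : u t = u x0 + V t := by linear_combination this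
      rw [this]; ring
    rw [setIntegral_congr_fun measurableSet_Ioc hurep]
    have hintA : IntegrableOn (fun t => deriv f t * u x0) (Set.Ioc x0 y0) :=
      (hf'.mul continuous_const).integrableOn_Ioc
    have hintB : IntegrableOn (fun t => deriv f t * V t) (Set.Ioc x0 y0) :=
      ((hf'.continuousOn.mul hVcont).integrableOn_compact isCompact_Icc).mono_set
        Set.Ioc_subset_Icc_self
    rw [integral_add hintA hintB]
    have hA : ∫ t in Set.Ioc x0 y0, deriv f t * u x0 = 0 := by
      rw [MeasureTheory.integral_mul_const, ← intervalIntegral.integral_of_le hx0y0,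
        integral_deriv_eq_sub (fun x _ => (hf.differentiable (zero_lt_one.trans_le hle).ne').differentiableAt)
          (hintf' x0 y0), hfy0, hfx0, sub_zero, zero_mul]
    rw [hA, zero_add]
    -- Fubini
    set μ0 := volume.restrict (Set.Ioc x0 y0) with hμ0
    set P : ℝ → ℝ → ℂ := fun t s => if s ≤ t then deriv f t * v s else 0 with hPdef
    have hPint : Integrable (Function.uncurry P) (μ0.prod μ0) := by
      have base : Integrable (fun z : ℝ × ℝ => deriv f z.1 * v z.2) (μ0.prod μ0) :=
        Integrable.mul_prod (hf'.integrableOn_Ioc) (hv.mono_set hIocsub)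
      have : Function.uncurry P =
          Set.indicator {z : ℝ × ℝ | z.2 ≤ z.1} (fun z => deriv f z.1 * v z.2) := by
        funext z
        rw [Set.indicator_apply]
        rfl
      rw [this]
      exact base.indicator (measurableSet_le measurable_snd measurable_fst)
    have hBeq : ∫ t in Set.Ioc x0 y0, deriv f t * V t = ∫ t, (∫ s, P t s ∂μ0) ∂μ0 := by
      refine setIntegral_congr_fun measurableSet_Ioc ?_
      intro t ht
      show deriv f t * V t = ∫ s, P t s ∂μ0
      have hVt : V t = ∫ s, Set.indicator (Set.Ioc x0 t) v s ∂μ0 := by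
        rw [hμ0, setIntegral_indicator measurableSet_Ioc]
        show (∫ s in x0..t, v s) = _
        rw [intervalIntegral.integral_of_le ht.1.le]
        congr 1
        rw [Set.Ioc_inter_Ioc, max_self, min_eq_right ht.2]
      rw [hVt, ← MeasureTheory.integral_const_mul]
      refine integral_congr_ae ((ae_restrict_iff' measurableSet_Ioc).mpr
        (Filter.Eventually.of_forall ?_))
      intro s hs
      show deriv f t * Set.indicator (Set.Ioc x0 t) v s = P t s
      rw [Set.indicator_apply, hPdef]
      by_cases h : s ≤ t
      · simp [Set.mem_Ioc, hs.1, h]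
      · simp [Set.mem_Ioc, h]
    rw [hBeq, integral_integral_swap hPint]
    have hInner : ∀ s ∈ Set.Ioc x0 y0, (∫ t, P t s ∂μ0) = -(f s * v s) := by
      intro s hs
      have h1 : (fun t => P t s) = fun t => Set.indicator (Set.Ici s) (deriv f) t * v s := by
        funext t
        rw [Set.indicator_apply, hPdef]
        by_cases h : s ≤ t
        · simp [Set.mem_Ici, h]
        · simp [Set.mem_Ici, h]
      rw [h1, MeasureTheory.integral_mul_const, hμ0, setIntegral_indicator measurableSet_Ici]
      have h2 : Set.Ioc x0 y0 ∩ Set.Ici s = Set.Icc s y0 := by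
        ext t
        simp only [Set.mem_inter_iff, Set.mem_Ioc, Set.mem_Ici, Set.mem_Icc]
        constructor
        · rintro ⟨⟨_, h2⟩, h3⟩; exact ⟨h3, h2⟩
        · rintro ⟨h2, h3⟩; exact ⟨⟨lt_of_lt_of_le hs.1 h2, h3⟩, h2⟩
      rw [h2, integral_Icc_eq_integral_Ioc, ← intervalIntegral.integral_of_le hs.2,
        hftc0 s ⟨hs.1.le, hs.2⟩]
      ring
    rw [show (∫ s, (∫ t, P t s ∂μ0) ∂μ0) = ∫ s in Set.Ioc x0 y0, -(f s * v s) from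
      setIntegral_congr_fun measurableSet_Ioc fun s hs => hInner s hs, MeasureTheory.integral_neg]

lemma prim_test {c d : ℝ} (hcd : c < d) {η : ℝ → ℂ} (hη : ContDiff ℝ ∞ η)
    (hηc : HasCompactSupport η) (hηs : tsupport η ⊆ Set.Ioo c d) (hint : ∫ x, η x = 0) :
    ∃ F : ℝ → ℂ, ContDiff ℝ ∞ F ∧ HasCompactSupport F ∧ tsupport F ⊆ Set.Ioo c d ∧
      deriv F = η := by
  have hηcont : Continuous η := hη.continuous
  rcases (tsupport η).eq_empty_or_nonempty with hKe | hKne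
  · have hη0 : η = fun _ => 0 := by
      funext x
      by_contra h
      have hx := subset_tsupport η h
      rw [hKe] at hx
      exact hx
    refine ⟨fun _ => 0, contDiff_const, ?_, ?_, ?_⟩
    · rw [HasCompactSupport]
      have : tsupport (fun _ : ℝ => (0:ℂ)) = ∅ := by
        simp [tsupport, Function.support]
      rw [this]; exact isCompact_empty
    · have : tsupport (fun _ : ℝ => (0:ℂ)) = ∅ := by
        simp [tsupport, Function.support]
      rw [this]; exact Set.empty_subset _
    · rw [hη0]; funext x; simp
  · set K := tsupport η with hKdef
    have hK : IsCompact K := hηc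
    set p := sInf K with hp
    set q := sSup K with hq
    have hpK : p ∈ K := hK.sInf_mem hKne
    have hqK : q ∈ K := hK.sSup_mem hKne
    have hpmem : p ∈ Set.Ioo c d := hηs hpK
    have hqmem : q ∈ Set.Ioo c d := hηs hqK
    set F : ℝ → ℂ := fun x => ∫ t in c..x, η t with hFdef
    have hF' : ∀ x : ℝ, HasDerivAt F (η x) x :=
      fun x => (hηcont.integral_hasStrictDerivAt c x).hasDerivAt
    have hderiv : deriv F = η := funext fun x => (hF' x).deriv
    have hsupp : Function.support F ⊆ Set.Icc p q := by
      intro x hx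
      by_contra hxpq
      apply hx
      rcases not_and_or.mp (Set.mem_Icc.not.mp hxpq) with h | h
      · push_neg at h
        have hEq : Set.EqOn η (fun _ => (0:ℂ)) (Set.uIcc c x) := by
          intro t ht
          by_contra ht0
          have htK : t ∈ K := subset_tsupport η ht0
          have : p ≤ t := csInf_le hK.bddBelow htK
          have : t ≤ max c x := ht.2
          have : max c x < p := max_lt (by linarith [hpmem.1]) h
          linarith
        show (∫ t in c..x, η t) = 0
        rw [intervalIntegral.integral_congr hEq]
        simp
      · push_neg at h
        have hcx : c ≤ x := by linarith [hqmem.1]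
        show (∫ t in c..x, η t) = 0
        rw [intervalIntegral.integral_of_le hcx,
          setIntegral_eq_integral_of_forall_compl_eq_zero (fun t ht => ?_), hint]
        by_contra ht0
        have htK : t ∈ K := subset_tsupport η ht0
        have h1 : c < t := (hηs htK).1
        have h2 : t ≤ q := le_csSup hK.bddAbove htK
        exact ht ⟨h1, by linarith⟩
    have htsupp : tsupport F ⊆ Set.Icc p q :=
      closure_minimal hsupp isClosed_Icc
    have hIccIoo : Set.Icc p q ⊆ Set.Ioo c d :=
      fun t ht => ⟨lt_of_lt_of_le hpmem.1 ht.1, lt_of_le_of_lt ht.2 hqmem.2⟩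
    refine ⟨F, ?_, ?_, htsupp.trans hIccIoo, hderiv⟩
    · rw [contDiff_infty_iff_deriv]
      exact ⟨fun x => (hF' x).differentiableAt, hderiv ▸ hη⟩
    · exact IsCompact.of_isClosed_subset isCompact_Icc (isClosed_tsupport F) htsupp

lemma coe_test {g : ℝ → ℝ} (hg : ContDiff ℝ ∞ g) (hgc : HasCompactSupport g) :
    ContDiff ℝ ∞ (fun x => (g x : ℂ)) ∧ HasCompactSupport (fun x => (g x : ℂ)) ∧
      tsupport (fun x => (g x : ℂ)) = tsupport g := by
  have hsupp : Function.support (fun x => (g x : ℂ)) = Function.support g := by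
    ext x; simp [Function.mem_support, Complex.ofReal_eq_zero]
  have hts : tsupport (fun x => (g x : ℂ)) = tsupport g := by
    rw [tsupport, tsupport, hsupp]
  refine ⟨Complex.ofRealCLM.contDiff.comp hg, ?_, hts⟩
  rw [HasCompactSupport, hts]
  exact hgc

lemma dBR {c d : ℝ} (hcd : c < d) {w : ℝ → ℂ} (hw : IntegrableOn w (Set.Ioo c d))
    (hvan : ∀ f : ℝ → ℂ, ContDiff ℝ ∞ f → HasCompactSupport f → tsupport f ⊆ Set.Ioo c d →
      ∫ x in Set.Ioo c d, deriv f x * w x = 0) :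
    ∃ C : ℂ, ∀ᵐ x ∂(volume.restrict (Set.Ioo c d)), w x = C := by
  set m := (c + d) / 2 with hm
  have hr : (0:ℝ) < (d - c) / 2 := by linarith
  set bump : ContDiffBump m := ⟨(d - c) / 8, (d - c) / 4, by linarith, by linarith⟩ with hbump
  set ψ : ℝ → ℂ := fun x => ((bump.normed volume x : ℝ) : ℂ) with hψdef
  have hψsupp : Function.support ψ = Function.support (bump.normed volume) := by
    ext x; simp [hψdef, Function.mem_support, Complex.ofReal_eq_zero]
  have hψts : tsupport ψ = Metric.closedBall m bump.rOut := by
    rw [tsupport, hψsupp, ← tsupport, bump.tsupport_normed_eq]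
  have hψs : tsupport ψ ⊆ Set.Ioo c d := by
    rw [hψts, Real.closedBall_eq_Icc]
    intro x hx
    simp only [Set.mem_Icc] at hx
    obtain ⟨h1, h2⟩ := hx
    have hmm : m = (c + d) / 2 := hm
    simp only [hmm] at h1 h2
    have hro : bump.rOut = (d - c) / 4 := rfl
    constructor <;> linarith
  have hψsm : ContDiff ℝ ∞ ψ :=
    Complex.ofRealCLM.contDiff.comp (bump.contDiff_normed (n := ⊤))
  have hψc : HasCompactSupport ψ := by
    rw [HasCompactSupport, hψts]
    exact isCompact_closedBall m _
  have hψint : ∫ x, ψ x = 1 := by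
    show (∫ x, ((bump.normed volume x : ℝ) : ℂ)) = 1
    have : (∫ x, ((bump.normed volume x : ℝ) : ℂ)) = ((∫ x, bump.normed volume x : ℝ) : ℂ) :=
      integral_ofReal
    rw [this, bump.integral_normed]
    simp
  have hψcont : Continuous ψ := hψsm.continuous
  set C : ℂ := ∫ x in Set.Ioo c d, ψ x * w x with hC
  obtain ⟨Cψ, hCψ⟩ := hψc.exists_bound_of_continuous hψcont
  -- main claim
  have claim : ∀ φ : ℝ → ℂ, ContDiff ℝ ∞ φ → HasCompactSupport φ →
      tsupport φ ⊆ Set.Ioo c d → ∫ x in Set.Ioo c d, φ x * w x = (∫ x, φ x) * C := by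
    intro φ hφ hφc hφs
    have hφcont : Continuous φ := hφ.continuous
    set r := ∫ x, φ x with hrdef
    set η : ℝ → ℂ := fun x => φ x - r * ψ x with hηdef
    have hηsm : ContDiff ℝ ∞ η := hφ.sub (contDiff_const.mul hψsm)
    have hsub : Function.support η ⊆ tsupport φ ∪ tsupport ψ := by
      intro x hx
      by_contra hmem
      rw [Set.mem_union] at hmem
      push_neg at hmem
      have h1 : φ x = 0 := image_eq_zero_of_notMem_tsupport hmem.1
      have h2 : ψ x = 0 := image_eq_zero_of_notMem_tsupport hmem.2
      apply hx
      simp [hηdef, h1, h2]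
    have htηsub : tsupport η ⊆ tsupport φ ∪ tsupport ψ :=
      closure_minimal hsub ((isClosed_tsupport φ).union (isClosed_tsupport ψ))
    have hηc : HasCompactSupport η :=
      IsCompact.of_isClosed_subset (hφc.union hψc) (isClosed_tsupport _) htηsub
    have hηs : tsupport η ⊆ Set.Ioo c d :=
      htηsub.trans (Set.union_subset hφs hψs)
    have hηint : ∫ x, η x = 0 := by
      rw [hηdef, integral_sub (hφcont.integrable_of_hasCompactSupport hφc)
        ((hψcont.integrable_of_hasCompactSupport hψc).const_mul r),
        MeasureTheory.integral_const_mul, hψint]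
      simp [hrdef]
    obtain ⟨F, hFsm, hFc, hFs, hFderiv⟩ := prim_test hcd hηsm hηc hηs hηint
    have h0 := hvan F hFsm hFc hFs
    rw [hFderiv] at h0
    obtain ⟨Cφ, hCφ⟩ := hφc.exists_bound_of_continuous hφcont
    have hφw : IntegrableOn (fun x => φ x * w x) (Set.Ioo c d) :=
      hw.bdd_mul hφcont.aestronglyMeasurable (Filter.Eventually.of_forall hCφ)
    have hψw : IntegrableOn (fun x => ψ x * w x) (Set.Ioo c d) :=
      hw.bdd_mul hψcont.aestronglyMeasurable (Filter.Eventually.of_forall hCψ)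
    have hexp : ∫ x in Set.Ioo c d, η x * w x
        = (∫ x in Set.Ioo c d, φ x * w x) - r * ∫ x in Set.Ioo c d, ψ x * w x := by
      have : (fun x => η x * w x) = fun x => φ x * w x - r * (ψ x * w x) := by
        funext x; simp only [hηdef]; ring
      rw [this, integral_sub hφw (hψw.const_mul r), MeasureTheory.integral_const_mul]
    rw [hexp] at h0
    rw [← hC] at h0
    linear_combination h0
  -- apply the distributional lemma
  have hwC : IntegrableOn (fun x => w x - C) (Set.Ioo c d) :=
    hw.sub (integrableOn_const measure_Ioo_lt_top.ne)
  have key := (isOpen_Ioo (a := c) (b := d)).ae_eq_zero_of_integral_contDiff_smul_eq_zero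
    (f := fun x => w x - C) (μ := volume) hwC.locallyIntegrableOn ?_
  · refine ⟨C, ?_⟩
    rw [ae_restrict_iff' measurableSet_Ioo]
    filter_upwards [key] with x hx hmem
    have := hx hmem
    linear_combination this
  · intro g hg hgc hgs
    obtain ⟨hφsm, hφc, hφts⟩ := coe_test hg hgc
    set φ : ℝ → ℂ := fun x => (g x : ℂ) with hφdef
    have hφs : tsupport φ ⊆ Set.Ioo c d := by rw [hφts]; exact hgs
    have hφcont : Continuous φ := hφsm.continuous
    have hglob : ∫ x, g x • (w x - C) = ∫ x in Set.Ioo c d, g x • (w x - C) := by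
      rw [setIntegral_eq_integral_of_forall_compl_eq_zero]
      intro x hx
      have : g x = 0 := image_eq_zero_of_notMem_tsupport (fun hmem => hx (hgs hmem))
      rw [this, zero_smul]
    rw [hglob]
    have hsmul : ∀ x, g x • (w x - C) = φ x * w x - φ x * C := by
      intro x
      rw [hφdef]
      simp only [Complex.real_smul]
      ring
    obtain ⟨Cφ, hCφ⟩ := hφc.exists_bound_of_continuous hφcont
    have hφw : IntegrableOn (fun x => φ x * w x) (Set.Ioo c d) :=
      hw.bdd_mul hφcont.aestronglyMeasurable (Filter.Eventually.of_forall hCφ)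
    have hφC : IntegrableOn (fun x => φ x * C) (Set.Ioo c d) :=
      (hφcont.integrable_of_hasCompactSupport hφc).integrableOn.mul_const C
    rw [show (fun x => g x • (w x - C)) = fun x => φ x * w x - φ x * C from funext hsmul]
    rw [integral_sub hφw hφC, claim φ hφsm hφc hφs, MeasureTheory.integral_mul_const]
    have : ∫ x in Set.Ioo c d, φ x = ∫ x, φ x :=
      setIntegral_eq_integral_of_forall_compl_eq_zero
        (fun x hx => image_eq_zero_of_notMem_tsupport (fun hmem => hx (hφs hmem)))
    rw [this, sub_self]

lemma star_mK : (star mK : ℂ) = -mK := conj_mK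


lemma star_intervalIntegral {f : ℝ → ℂ} {x y : ℝ} (hf : IntervalIntegrable f volume x y) :
    (∫ t in x..y, star (f t)) = star (∫ t in x..y, f t) := by
  have h := (Complex.conjCLE.toContinuousLinearMap).intervalIntegral_comp_comm hf
  simpa using h

lemma uIcc_subset_Ioo {c d x y : ℝ} (hx : x ∈ Set.Ioo c d) (hy : y ∈ Set.Ioo c d) :
    Set.uIcc x y ⊆ Set.Ioo c d := by
  intro t ht
  exact ⟨lt_of_lt_of_le (lt_min hx.1 hy.1) ht.1, lt_of_le_of_lt ht.2 (max_lt hx.2 hy.2)⟩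

section Main
variable {n : ℕ} {a b : Fin n → ℝ}

lemma omega_disjoint (hab : EndpointsOrdered a b) :
    Pairwise (Function.onFun Disjoint fun i => Set.Ioo (a i) (b i)) := by
  intro i j hij
  rw [Function.onFun, Set.disjoint_left]
  intro x hxi hxj
  rcases hij.lt_or_gt with h | h
  · have h1 := hab.2 i j h; have h2 := hxi.2; have h3 := hxj.1; linarith
  · have h1 := hab.2 j i h; have h2 := hxj.2; have h3 := hxi.1; linarith

lemma omega_fin : volume (Omega a b) < ⊤ := by
  refine lt_of_le_of_lt (measure_iUnion_le _) ?_
  rw [tsum_fintype]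
  exact ENNReal.sum_lt_top.mpr fun i _ => measure_Ioo_lt_top

lemma omega_finite : IsFiniteMeasure (volume.restrict (Omega a b)) :=
  ⟨by rw [Measure.restrict_apply_univ]; exact omega_fin⟩

lemma hsubJ (i : Fin n) : Set.Ioo (a i) (b i) ⊆ Omega a b :=
  Set.subset_iUnion (fun i => Set.Ioo (a i) (b i)) i

lemma restrict_sub (i : Fin n) {u : ℝ → ℂ} (hu : Integrable u (volume.restrict (Omega a b))) :
    IntegrableOn u (Set.Ioo (a i) (b i)) volume := by
  have h := hu.restrict (s := Set.Ioo (a i) (b i))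
  rwa [Measure.restrict_restrict measurableSet_Ioo,
    Set.inter_eq_self_of_subset_left (hsubJ i)] at h

lemma split_omega (hab : EndpointsOrdered a b) {F : ℝ → ℂ}
    (hF : Integrable F (volume.restrict (Omega a b))) :
    ∫ x in Omega a b, F x = ∑ i, ∫ x in Set.Ioo (a i) (b i), F x := by
  rw [Omega, integral_iUnion (fun i => measurableSet_Ioo) (omega_disjoint hab) hF, tsum_fintype]

lemma tsupport_inter_Icc (hab : EndpointsOrdered a b) {f : ℝ → ℂ}
    (hfs : tsupport f ⊆ Omega a b) (i : Fin n) :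
    tsupport f ∩ Set.Icc (a i) (b i) ⊆ Set.Ioo (a i) (b i) := by
  rintro x ⟨hx1, hx2⟩
  obtain ⟨j, hj⟩ := Set.mem_iUnion.mp (hfs hx1)
  rcases eq_or_ne j i with rfl | hne
  · exact hj
  · exfalso
    rcases hne.lt_or_gt with h | h
    · have h1 := hab.2 j i h; have h2 := hj.2; have h3 := hx2.1; linarith
    · have h1 := hab.2 i j h; have h2 := hj.1; have h3 := hx2.2; linarith

lemma key_ibp (hab : EndpointsOrdered a b) {f u v : ℝ → ℂ}
    (hf : IsCcSmooth a b f)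
    (hu : Integrable u (volume.restrict (Omega a b)))
    (hv : Integrable v (volume.restrict (Omega a b)))
    (ftc : ∀ i : Fin n, ∀ x ∈ Set.Ioo (a i) (b i), ∀ y ∈ Set.Ioo (a i) (b i),
      u y - u x = ∫ t in x..y, v t) :
    ∫ x in Omega a b, deriv f x * u x = -∫ x in Omega a b, f x * v x := by
  obtain ⟨hfsm, hfc, hfs⟩ := hf
  have hle : (1 : WithTop ℕ∞) ≤ ∞ := by exact_mod_cast (le_top : (1:ℕ∞) ≤ ⊤)
  have hfco := hfsm.continuous
  have hf' := hfsm.continuous_deriv hle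
  obtain ⟨C1, hC1⟩ := hfc.exists_bound_of_continuous hfco
  obtain ⟨C2, hC2⟩ := (hfc.deriv).exists_bound_of_continuous hf'
  have hFu : Integrable (fun x => deriv f x * u x) (volume.restrict (Omega a b)) :=
    hu.bdd_mul hf'.aestronglyMeasurable (Filter.Eventually.of_forall hC2)
  have hFv : Integrable (fun x => f x * v x) (volume.restrict (Omega a b)) :=
    hv.bdd_mul hfco.aestronglyMeasurable (Filter.Eventually.of_forall hC1)
  rw [split_omega hab hFu, split_omega hab hFv, ← Finset.sum_neg_distrib]
  refine Finset.sum_congr rfl fun i _ => ?_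
  exact ibp_Ioo (hab.1 i) hfsm hfc (tsupport_inter_Icc hab hfs i)
    (restrict_sub i hu) (restrict_sub i hv) (ftc i)

end Main

/-- `𝖣` is symmetric, and `g ∈ 𝒟(𝖣*)` with `𝖣* g = h` iff `g` has a
representative in `𝒟_max` and `h = (1/(2πi)) g'` a.e. -/
theorem stmt_0 (n : ℕ) (a b : Fin n → ℝ) (hab : EndpointsOrdered a b) :
    (∀ f g : ℝ → ℂ, IsCcSmooth a b f → IsCcSmooth a b g →
      ∫ x in Omega a b, (mK * deriv f x) * star (g x)
        = ∫ x in Omega a b, f x * star (mK * deriv g x)) ∧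
    (∀ g h : ℝ → ℂ, MemLp g 2 (volume.restrict (Omega a b)) →
      MemLp h 2 (volume.restrict (Omega a b)) →
      ((∀ f : ℝ → ℂ, IsCcSmooth a b f →
          ∫ x in Omega a b, (mK * deriv f x) * star (g x)
            = ∫ x in Omega a b, f x * star (h x)) ↔
        ∃ (gt gd : ℝ → ℂ) (va vb : Fin n → ℂ), MemDmax a b gt gd va vb ∧
          gt =ᵐ[volume.restrict (Omega a b)] g ∧
          h =ᵐ[volume.restrict (Omega a b)] fun x => mK * gd x)) := by
  have hle : (1 : WithTop ℕ∞) ≤ ∞ := by exact_mod_cast (le_top : (1:ℕ∞) ≤ ⊤)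
  haveI hfin : IsFiniteMeasure (volume.restrict (Omega a b)) := omega_finite
  constructor
  · -- symmetry
    intro f g hfcc hgcc
    obtain ⟨hgsm, hgc, hgs⟩ := hgcc
    have hgco := hgsm.continuous
    have hg' := hgsm.continuous_deriv hle
    have hu : Integrable (fun x => star (g x)) (volume.restrict (Omega a b)) :=
      integrable_star (hgco.integrable_of_hasCompactSupport hgc).restrict
    have hv : Integrable (fun x => star (deriv g x)) (volume.restrict (Omega a b)) :=
      integrable_star (hg'.integrable_of_hasCompactSupport hgc.deriv).restrict
    have ftc : ∀ i : Fin n, ∀ x ∈ Set.Ioo (a i) (b i), ∀ y ∈ Set.Ioo (a i) (b i),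
        star (g y) - star (g x) = ∫ t in x..y, star (deriv g t) := by
      intro i x _ y _
      have h1 : ∫ t in x..y, deriv g t = g y - g x :=
        intervalIntegral.integral_deriv_eq_sub
          (fun t _ => (hgsm.differentiable (zero_lt_one.trans_le hle).ne').differentiableAt)
          (hg'.intervalIntegrable x y)
      calc star (g y) - star (g x) = star (g y - g x) := (star_sub _ _).symm
        _ = star (∫ t in x..y, deriv g t) := by rw [h1]
        _ = ∫ t in x..y, star (deriv g t) :=
            (star_intervalIntegral (hg'.intervalIntegrable x y)).symm
    have key := key_ibp hab hfcc hu hv ftc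
    have hL : ∫ x in Omega a b, (mK * deriv f x) * star (g x)
        = mK * ∫ x in Omega a b, deriv f x * star (g x) := by
      simp_rw [mul_assoc]; exact integral_const_mul _ _
    have hR : ∫ x in Omega a b, f x * star (mK * deriv g x)
        = star mK * ∫ x in Omega a b, f x * star (deriv g x) := by
      have hpt : ∀ x, f x * star (mK * deriv g x)
          = star mK * (f x * star (deriv g x)) := by
        intro x; rw [star_mul']; ring
      simp_rw [hpt]; exact integral_const_mul _ _
    rw [hL, hR, key, star_mK]; ring
  · -- adjoint characterization
    intro g h hg hh
    have hgInt : Integrable g (volume.restrict (Omega a b)) := hg.integrable one_le_two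
    have hhInt : Integrable h (volume.restrict (Omega a b)) := hh.integrable one_le_two
    constructor
    · -- forward direction
      intro hadj
      set gd : ℝ → ℂ := fun x => mK⁻¹ * h x with hgddef
      have hgdmem : MemLp gd 2 (volume.restrict (Omega a b)) := hh.const_mul mK⁻¹
      have hgdInt : Integrable gd (volume.restrict (Omega a b)) := hgdmem.integrable one_le_two
      set mid : Fin n → ℝ := fun i => (a i + b i) / 2 with hmiddef
      set G : Fin n → ℝ → ℂ := fun i x => ∫ t in mid i..x, gd t with hGdef
      have hmidI : ∀ i : Fin n, mid i ∈ Set.Icc (a i) (b i) := by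
        intro i
        have h1 := hab.1 i
        have h2 : mid i = (a i + b i) / 2 := rfl
        rw [Set.mem_Icc, h2]
        constructor <;> linarith
      have hgdOn : ∀ i : Fin n, IntegrableOn gd (Set.Ioo (a i) (b i)) volume :=
        fun i => restrict_sub i hgdInt
      have hgdIcc : ∀ i, IntegrableOn gd (Set.Icc (a i) (b i)) volume := fun i =>
        (integrableOn_Icc_iff_integrableOn_Ioo).mpr (hgdOn i)
      have hgdII : ∀ i : Fin n, ∀ x ∈ Set.Icc (a i) (b i), ∀ y ∈ Set.Icc (a i) (b i),
          IntervalIntegrable gd volume x y := by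
        intro i x hx y hy
        exact ((hgdIcc i).mono_set (Set.uIcc_subset_Icc hx hy)).intervalIntegrable
      have hGftc : ∀ i : Fin n, ∀ x ∈ Set.Ioo (a i) (b i), ∀ y ∈ Set.Ioo (a i) (b i),
          G i y - G i x = ∫ t in x..y, gd t := by
        intro i x hx y hy
        exact intervalIntegral.integral_interval_sub_left
          (hgdII i (mid i) (hmidI i) y (Set.Ioo_subset_Icc_self hy))
          (hgdII i (mid i) (hmidI i) x (Set.Ioo_subset_Icc_self hx))
      have hGcont : ∀ i : Fin n, ContinuousOn (G i) (Set.Icc (a i) (b i)) := by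
        intro i
        have h1 := intervalIntegral.continuousOn_primitive_interval'
          (hgdII i (a i) ⟨le_refl _, (hab.1 i).le⟩ (b i) ⟨(hab.1 i).le, le_refl _⟩)
          (by rw [Set.uIcc_of_le (hab.1 i).le]; exact hmidI i)
        rwa [Set.uIcc_of_le (hab.1 i).le] at h1
      have hGint : ∀ i : Fin n, IntegrableOn (G i) (Set.Ioo (a i) (b i)) volume := fun i =>
        ((hGcont i).integrableOn_Icc).mono_set Set.Ioo_subset_Icc_self
      have hstar_gd : ∀ x, star (gd x) = -(mK⁻¹ * star (h x)) := by
        intro x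
        have h1 : gd x = mK⁻¹ * h x := rfl
        rw [h1, star_mul']
        have h2 : (star mK⁻¹ : ℂ) = -mK⁻¹ := by
          rw [star_inv₀, star_mK, inv_neg]
        rw [h2]; ring
      -- existence of the a.e. constants
      have hCex : ∀ i : Fin n, ∃ C : ℂ,
          ∀ᵐ x ∂volume.restrict (Set.Ioo (a i) (b i)), g x - G i x = C := by
        intro i
        have hcd := hab.1 i
        have hwint : IntegrableOn (fun x => star (g x) - star (G i x))
            (Set.Ioo (a i) (b i)) volume :=
          (integrable_star (restrict_sub i hgInt)).sub (integrable_star (hGint i))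
        have hvan : ∀ φ : ℝ → ℂ, ContDiff ℝ ∞ φ → HasCompactSupport φ →
            tsupport φ ⊆ Set.Ioo (a i) (b i) →
            ∫ x in Set.Ioo (a i) (b i), deriv φ x * (star (g x) - star (G i x)) = 0 := by
          intro φ hφsm hφc hφs
          have hφs' : tsupport φ ⊆ Omega a b := hφs.trans (hsubJ i)
          have hφcont := hφsm.continuous
          have hφ' := hφsm.continuous_deriv hle
          obtain ⟨C1, hC1⟩ := hφc.exists_bound_of_continuous hφcont
          obtain ⟨C2, hC2⟩ := hφc.deriv.exists_bound_of_continuous hφ'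
          have hder0 : ∀ x, x ∉ Set.Ioo (a i) (b i) → deriv φ x = 0 := by
            intro x hx
            by_contra h0
            exact hx (hφs (support_deriv_subset h0))
          have hφ0 : ∀ x, x ∉ Set.Ioo (a i) (b i) → φ x = 0 := fun x hx =>
            image_eq_zero_of_notMem_tsupport (fun hmem => hx (hφs hmem))
          have hloc := hadj φ ⟨hφsm, hφc, hφs'⟩
          have e1 : ∫ x in Omega a b, (mK * deriv φ x) * star (g x)
              = ∫ x in Set.Ioo (a i) (b i), (mK * deriv φ x) * star (g x) := by
            rw [setIntegral_eq_integral_of_forall_compl_eq_zero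
                (fun x hx => by rw [hder0 x fun hmem => hx (hsubJ i hmem)]; ring),
              setIntegral_eq_integral_of_forall_compl_eq_zero
                (fun x hx => by rw [hder0 x hx]; ring)]
          have e2 : ∫ x in Omega a b, φ x * star (h x)
              = ∫ x in Set.Ioo (a i) (b i), φ x * star (h x) := by
            rw [setIntegral_eq_integral_of_forall_compl_eq_zero
                (fun x hx => by rw [hφ0 x fun hmem => hx (hsubJ i hmem)]; ring),
              setIntegral_eq_integral_of_forall_compl_eq_zero
                (fun x hx => by rw [hφ0 x hx]; ring)]
          rw [e1, e2] at hloc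
          have hL : ∫ x in Set.Ioo (a i) (b i), (mK * deriv φ x) * star (g x)
              = mK * ∫ x in Set.Ioo (a i) (b i), deriv φ x * star (g x) := by
            simp_rw [mul_assoc]; exact integral_const_mul _ _
          rw [hL] at hloc
          have h5 : ∫ x in Set.Ioo (a i) (b i), deriv φ x * star (g x)
              = mK⁻¹ * ∫ x in Set.Ioo (a i) (b i), φ x * star (h x) := by
            rw [← hloc, inv_mul_cancel_left₀ mK_ne]
          have hibp := ibp_Ioo hcd hφsm hφc (fun x hx => hφs hx.1)
            (integrable_star (hGint i)) (integrable_star (hgdOn i))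
            (fun x hx y hy => by
              calc star (G i y) - star (G i x) = star (G i y - G i x) := (star_sub _ _).symm
                _ = star (∫ t in x..y, gd t) := by rw [hGftc i x hx y hy]
                _ = ∫ t in x..y, star (gd t) :=
                    (star_intervalIntegral (hgdII i x (Set.Ioo_subset_Icc_self hx) y
                      (Set.Ioo_subset_Icc_self hy))).symm)
          have h6 : ∫ x in Set.Ioo (a i) (b i), deriv φ x * star (G i x)
              = mK⁻¹ * ∫ x in Set.Ioo (a i) (b i), φ x * star (h x) := by
            rw [hibp]
            have hpt : ∀ x, φ x * star (gd x) = -(mK⁻¹ * (φ x * star (h x))) := by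
              intro x; rw [hstar_gd x]; ring
            simp_rw [hpt]
            rw [MeasureTheory.integral_neg, MeasureTheory.integral_const_mul]
            ring
          have hsplit : ∫ x in Set.Ioo (a i) (b i), deriv φ x * (star (g x) - star (G i x))
              = (∫ x in Set.Ioo (a i) (b i), deriv φ x * star (g x))
                - ∫ x in Set.Ioo (a i) (b i), deriv φ x * star (G i x) := by
            have hpt : (fun x => deriv φ x * (star (g x) - star (G i x)))
                = fun x => deriv φ x * star (g x) - deriv φ x * star (G i x) := by
              funext x; ring
            rw [hpt, integral_sub
              ((integrable_star (restrict_sub i hgInt)).bdd_mul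
                hφ'.aestronglyMeasurable (Filter.Eventually.of_forall hC2))
              ((integrable_star (hGint i)).bdd_mul hφ'.aestronglyMeasurable (Filter.Eventually.of_forall hC2))]
          rw [hsplit, h5, h6, sub_self]
        obtain ⟨Cst, hCst⟩ := dBR hcd hwint hvan
        refine ⟨star Cst, ?_⟩
        filter_upwards [hCst] with x hx
        have h1 := congrArg star hx
        simpa [star_sub, star_star] using h1
      choose Cv hCv using hCex
      set gt : ℝ → ℂ :=
        fun x => ∑ i, Set.indicator (Set.Ioo (a i) (b i)) (fun y => Cv i + G i y) x with hgtdef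
      have gt_eq : ∀ i : Fin n, ∀ x ∈ Set.Ioo (a i) (b i), gt x = Cv i + G i x := by
        intro i x hx
        have h1 : gt x = ∑ j, Set.indicator (Set.Ioo (a j) (b j)) (fun y => Cv j + G j y) x :=
          rfl
        rw [h1, Finset.sum_eq_single i]
        · exact Set.indicator_of_mem hx _
        · intro j _ hj
          apply Set.indicator_of_notMem
          intro hxj
          exact (Set.disjoint_left.mp (omega_disjoint hab hj) hxj) hx
        · intro hi; exact absurd (Finset.mem_univ i) hi
      have hae : g =ᵐ[volume.restrict (Omega a b)] gt := by
        rw [Omega]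
        refine (ae_restrict_iUnion_iff _ fun x => g x = gt x).mpr fun i => ?_
        filter_upwards [hCv i, ae_restrict_mem measurableSet_Ioo] with x hx hmem
        rw [gt_eq i x hmem]
        linear_combination hx
      refine ⟨gt, gd, fun i => Cv i + ∫ t in mid i..(a i), gd t,
        fun i => Cv i + ∫ t in mid i..(b i), gd t,
        ⟨hg.ae_eq hae, hgdmem, ?_, ?_, ?_⟩, hae.symm,
        Filter.Eventually.of_forall fun x => ?_⟩
      · intro i x hx y hy
        rw [gt_eq i y hy, gt_eq i x hx]
        have h1 := hGftc i x hx y hy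
        linear_combination h1
      · intro i
        have hcont : ContinuousWithinAt (G i) (Set.Ioo (a i) (b i)) (a i) :=
          ((hGcont i).continuousWithinAt ⟨le_refl _, (hab.1 i).le⟩).mono
            Set.Ioo_subset_Icc_self
        have h2 : Filter.Tendsto (fun x => Cv i + G i x)
            (nhdsWithin (a i) (Set.Ioo (a i) (b i)))
            (nhds (Cv i + ∫ t in mid i..(a i), gd t)) :=
          tendsto_const_nhds.add hcont
        refine h2.congr' ?_
        filter_upwards [self_mem_nhdsWithin] with x hx
        exact (gt_eq i x hx).symm
      · intro i
        have hcont : ContinuousWithinAt (G i) (Set.Ioo (a i) (b i)) (b i) :=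
          ((hGcont i).continuousWithinAt ⟨(hab.1 i).le, le_refl _⟩).mono
            Set.Ioo_subset_Icc_self
        have h2 : Filter.Tendsto (fun x => Cv i + G i x)
            (nhdsWithin (b i) (Set.Ioo (a i) (b i)))
            (nhds (Cv i + ∫ t in mid i..(b i), gd t)) :=
          tendsto_const_nhds.add hcont
        refine h2.congr' ?_
        filter_upwards [self_mem_nhdsWithin] with x hx
        exact (gt_eq i x hx).symm
      · show h x = mK * (mK⁻¹ * h x)
        rw [← mul_assoc, mul_inv_cancel₀ mK_ne, one_mul]
    · -- backward direction
      rintro ⟨gt, gd, va, vb, hmem, hgt, hh2⟩ f hf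
      have hgtInt : Integrable gt (volume.restrict (Omega a b)) :=
        hmem.memL2.integrable one_le_two
      have hgdInt : Integrable gd (volume.restrict (Omega a b)) :=
        hmem.derivL2.integrable one_le_two
      have hgdII : ∀ i : Fin n, ∀ x ∈ Set.Ioo (a i) (b i), ∀ y ∈ Set.Ioo (a i) (b i),
          IntervalIntegrable gd volume x y := by
        intro i x hx y hy
        exact (IntegrableOn.mono_set (restrict_sub i hgdInt) (uIcc_subset_Ioo hx hy)).intervalIntegrable
      have hu := integrable_star hgtInt
      have hv := integrable_star hgdInt
      have ftc : ∀ i : Fin n, ∀ x ∈ Set.Ioo (a i) (b i), ∀ y ∈ Set.Ioo (a i) (b i),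
          star (gt y) - star (gt x) = ∫ t in x..y, star (gd t) := by
        intro i x hx y hy
        calc star (gt y) - star (gt x) = star (gt y - gt x) := (star_sub _ _).symm
          _ = star (∫ t in x..y, gd t) := by rw [hmem.ftc i x hx y hy]
          _ = ∫ t in x..y, star (gd t) := (star_intervalIntegral (hgdII i x hx y hy)).symm
      have key := key_ibp hab hf hu hv ftc
      have e1 : ∫ x in Omega a b, (mK * deriv f x) * star (g x)
          = ∫ x in Omega a b, (mK * deriv f x) * star (gt x) :=
        integral_congr_ae (by filter_upwards [hgt] with x hx; rw [hx])
      have e2 : ∫ x in Omega a b, f x * star (h x)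
          = ∫ x in Omega a b, f x * star (mK * gd x) :=
        integral_congr_ae (by filter_upwards [hh2] with x hx; rw [hx])
      rw [e1, e2]
      have hL : ∫ x in Omega a b, (mK * deriv f x) * star (gt x)
          = mK * ∫ x in Omega a b, deriv f x * star (gt x) := by
        simp_rw [mul_assoc]; exact integral_const_mul _ _
      have hR : ∫ x in Omega a b, f x * star (mK * gd x)
          = star mK * ∫ x in Omega a b, f x * star (gd x) := by
        have hpt : ∀ x, f x * star (mK * gd x) = star mK * (f x * star (gd x)) := by
          intro x; rw [star_mul']; ring
        simp_rw [hpt]; exact integral_const_mul _ _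
      rw [hL, hR, key, star_mK]; ring
end
end

section
/- Let B be a unitary matrix on ℂⁿ and λ ∈ ℂ. A function f ∈ L²(Ω) satisfies f ∈ 𝒟_B and (1/(2πi)) f′ = λ f almost everywhere if and only if there exists c = (c_1,…,c_n) ∈ ℂⁿ with B E(λα⃗) c = E(λβ⃗) c such that f(x) = e^{2πiλx} Σ_{i=1}^n c_i χ_{J_i}(x) for a.e. x ∈ Ω. In particular, the eigenspace of T_B for any eigenvalue λ has dimension at most n. -/
open MeasureTheory Complex Filter

noncomputable section

namespace Stmt11Aux

variable {n : ℕ} {a b : Fin n → ℝ}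

lemma isOpen_omega (a b : Fin n → ℝ) : IsOpen (Omega a b) :=
  isOpen_iUnion fun _ => isOpen_Ioo

lemma subset_omega (i : Fin n) : Set.Ioo (a i) (b i) ⊆ Omega a b :=
  Set.subset_iUnion (fun i => Set.Ioo (a i) (b i)) i

lemma notMem (hab : EndpointsOrdered a b) {i j : Fin n} (hij : j ≠ i) {x : ℝ}
    (hx : x ∈ Set.Ioo (a i) (b i)) : x ∉ Set.Ioo (a j) (b j) := by
  intro hx'
  rcases lt_or_gt_of_ne hij with h | h
  · have := hab.2 j i h
    have h1 := hx.1; have h2 := hx'.2; linarith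
  · have := hab.2 i j h
    have h1 := hx'.1; have h2 := hx.2; linarith

lemma sum_indicator_eval (hab : EndpointsOrdered a b) (c : Fin n → ℂ) {i : Fin n} {x : ℝ}
    (hx : x ∈ Set.Ioo (a i) (b i)) :
    ∑ j, Set.indicator (Set.Ioo (a j) (b j)) (fun _ => c j) x = c i := by
  rw [Finset.sum_eq_single i]
  · exact Set.indicator_of_mem hx _
  · intro j _ hj
    exact Set.indicator_of_notMem (notMem hab hj hx) _
  · intro h; exact absurd (Finset.mem_univ i) h

lemma isFiniteRestrict (a b : Fin n → ℝ) :
    IsFiniteMeasure (volume.restrict (Omega a b)) := by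
  constructor
  rw [Measure.restrict_apply_univ]
  refine lt_of_le_of_lt (measure_iUnion_le _) ?_
  rw [tsum_fintype]
  exact ENNReal.sum_lt_top.mpr fun i _ => measure_Ioo_lt_top

lemma hasDerivAt_expc (K : ℂ) (x : ℝ) :
    HasDerivAt (fun t : ℝ => Complex.exp (K * t)) (K * Complex.exp (K * x)) x := by
  have h1 : HasDerivAt (fun t : ℝ => K * (t : ℂ)) K x := by
    simpa using (Complex.ofRealCLM.hasDerivAt (x := x)).const_mul K
  have := (Complex.hasDerivAt_exp (K * x)).comp x h1
  simpa [mul_comm, Function.comp_def] using this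

def Formula (a b : Fin n → ℝ) (l : ℂ) (c : Fin n → ℂ) : ℝ → ℂ := fun x =>
  Complex.exp (2 * (Real.pi : ℂ) * Complex.I * l * x)
    * ∑ i, Set.indicator (Set.Ioo (a i) (b i)) (fun _ => c i) x

lemma formula_eq (hab : EndpointsOrdered a b) (l : ℂ) (c : Fin n → ℂ) {i : Fin n} {x : ℝ}
    (hx : x ∈ Set.Ioo (a i) (b i)) :
    Formula a b l c x = Complex.exp (2 * (Real.pi : ℂ) * Complex.I * l * x) * c i := by
  rw [Formula, sum_indicator_eval hab c hx]

lemma formula_add (l : ℂ) (c d : Fin n → ℂ) :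
    Formula a b l (c + d) = fun x => Formula a b l c x + Formula a b l d x := by
  funext x
  simp only [Formula, Pi.add_apply, Set.indicator_apply]
  rw [← mul_add, ← Finset.sum_add_distrib]
  congr 1
  refine Finset.sum_congr rfl fun i _ => ?_
  split_ifs <;> simp

lemma formula_smul (l : ℂ) (t : ℂ) (c : Fin n → ℂ) :
    Formula a b l (t • c) = fun x => t * Formula a b l c x := by
  funext x
  simp only [Formula, Pi.smul_apply, smul_eq_mul, Set.indicator_apply]
  rw [show (∑ i, if x ∈ Set.Ioo (a i) (b i) then t * c i else 0)
      = t * ∑ i, if x ∈ Set.Ioo (a i) (b i) then c i else 0 by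
    rw [Finset.mul_sum]
    refine Finset.sum_congr rfl fun i _ => ?_
    split_ifs <;> simp]
  ring

lemma norm_expc (K : ℂ) (x : ℝ) : ‖Complex.exp (K * x)‖ = Real.exp (K.re * x) := by
  rw [Complex.norm_exp]
  congr 1
  simp [Complex.mul_re]

lemma memFormula (hab : EndpointsOrdered a b) (l : ℂ) (c : Fin n → ℂ) :
    MemLp (Formula a b l c) 2 (volume.restrict (Omega a b)) := by
  haveI := isFiniteRestrict a b
  set K : ℂ := 2 * (Real.pi : ℂ) * Complex.I * l with hK
  have hmeas : AEStronglyMeasurable (Formula a b l c) (volume.restrict (Omega a b)) := by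
    apply AEStronglyMeasurable.mul
    · exact (Complex.continuous_exp.comp
        (continuous_const.mul Complex.continuous_ofReal)).aestronglyMeasurable
    · refine Measurable.aestronglyMeasurable ?_
      exact Finset.measurable_sum _ fun i _ =>
        (measurable_const.indicator measurableSet_Ioo)
  set M : ℝ := ∑ i, (|a i| + |b i|) with hM
  refine MemLp.of_bound hmeas (Real.exp (|K.re| * M) * ∑ i, ‖c i‖) ?_
  refine (ae_restrict_mem (isOpen_omega a b).measurableSet).mono fun x hx => ?_
  obtain ⟨i, hxi⟩ := Set.mem_iUnion.mp hx
  rw [formula_eq hab l c hxi, norm_mul, norm_expc]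
  have hxM : |x| ≤ M := by
    have h1 : |a i| + |b i| ≤ M := by
      rw [hM]
      exact Finset.single_le_sum (f := fun i => |a i| + |b i|)
        (fun j _ => by positivity) (Finset.mem_univ i)
    have := hxi.1; have := hxi.2
    rw [abs_le]; constructor
    · nlinarith [le_abs_self (a i), neg_abs_le (a i), abs_nonneg (b i)]
    · nlinarith [le_abs_self (b i), abs_nonneg (a i)]
  have h2 : K.re * x ≤ |K.re| * M := by
    calc K.re * x ≤ |K.re * x| := le_abs_self _
    _ = |K.re| * |x| := abs_mul _ _
    _ ≤ |K.re| * M := by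
        exact mul_le_mul_of_nonneg_left hxM (abs_nonneg _)
  have h3 : ‖c i‖ ≤ ∑ j, ‖c j‖ :=
    Finset.single_le_sum (f := fun j => ‖c j‖) (fun j _ => norm_nonneg _) (Finset.mem_univ i)
  exact mul_le_mul (Real.exp_le_exp.mpr h2) h3 (norm_nonneg _) (Real.exp_nonneg _)




lemma mulVec_expDiag {n : ℕ} (z : Fin n → ℂ) (c : Fin n → ℂ) :
    (expDiag z).mulVec c = fun i => Complex.exp (2 * (Real.pi : ℂ) * Complex.I * z i) * c i :=
  funext fun i => Matrix.mulVec_diagonal _ _ _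

variable {n : ℕ} {a b : Fin n → ℝ}

lemma memDmax_formula (hab : EndpointsOrdered a b) (l : ℂ) (c : Fin n → ℂ) :
    MemDmax a b (Formula a b l c)
      (fun x => (2 * (Real.pi : ℂ) * Complex.I * l) * Formula a b l c x)
      (fun i => Complex.exp (2 * (Real.pi : ℂ) * Complex.I * l * (a i)) * c i)
      (fun i => Complex.exp (2 * (Real.pi : ℂ) * Complex.I * l * (b i)) * c i) := by
  set K := 2 * (Real.pi : ℂ) * Complex.I * l with hK
  have hexp_cont : Continuous (fun t : ℝ => Complex.exp (K * t)) :=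
    Complex.continuous_exp.comp (continuous_const.mul Complex.continuous_ofReal)
  constructor
  · exact memFormula hab l c
  · exact (memFormula hab l c).const_mul K
  · intro i x hx y hy
    have hsub : Set.uIcc x y ⊆ Set.Ioo (a i) (b i) :=
      Set.ordConnected_Ioo.uIcc_subset hx hy
    have h1 : Set.EqOn (fun t : ℝ => K * Formula a b l c t)
        (fun t : ℝ => K * (Complex.exp (K * t) * c i)) (Set.uIcc x y) := fun t ht => by
      simp only [formula_eq hab l c (hsub ht)]
      rfl
    rw [intervalIntegral.integral_congr h1]
    have h2 : ∀ t ∈ Set.uIcc x y,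
        HasDerivAt (fun s : ℝ => Complex.exp (K * s) * c i)
          (K * (Complex.exp (K * t) * c i)) t := by
      intro t _
      simpa [mul_assoc] using (hasDerivAt_expc K t).mul_const (c i)
    rw [intervalIntegral.integral_eq_sub_of_hasDerivAt h2
      (((continuous_const.mul (hexp_cont.mul continuous_const))).intervalIntegrable x y)]
    rw [formula_eq hab l c hx, formula_eq hab l c hy]
  · intro i
    have h1 : Tendsto (fun t : ℝ => Complex.exp (K * t) * c i)
        (nhdsWithin (a i) (Set.Ioo (a i) (b i)))
        (nhds (Complex.exp (K * a i) * c i)) :=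
      (((hexp_cont.tendsto (a i)).mul tendsto_const_nhds)).mono_left nhdsWithin_le_nhds
    refine Tendsto.congr' ?_ h1
    filter_upwards [self_mem_nhdsWithin] with t ht
    rw [formula_eq hab l c ht]
  · intro i
    have h1 : Tendsto (fun t : ℝ => Complex.exp (K * t) * c i)
        (nhdsWithin (b i) (Set.Ioo (a i) (b i)))
        (nhds (Complex.exp (K * b i) * c i)) :=
      (((hexp_cont.tendsto (b i)).mul tendsto_const_nhds)).mono_left nhdsWithin_le_nhds
    refine Tendsto.congr' ?_ h1
    filter_upwards [self_mem_nhdsWithin] with t ht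
    rw [formula_eq hab l c ht]

lemma forward (hab : EndpointsOrdered a b) {l : ℂ} {ft g : ℝ → ℂ} {fa fb : Fin n → ℂ}
    (hD : MemDmax a b ft g fa fb)
    (heig : (fun x => mK * g x) =ᵐ[volume.restrict (Omega a b)] fun x => l * ft x) :
    ∃ c : Fin n → ℂ,
      fa = (fun i => Complex.exp (2 * (Real.pi : ℂ) * Complex.I * l * (a i)) * c i) ∧
      fb = (fun i => Complex.exp (2 * (Real.pi : ℂ) * Complex.I * l * (b i)) * c i) ∧
      ∀ x ∈ Omega a b, ft x = Formula a b l c x := by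
  haveI := isFiniteRestrict a b
  set K : ℂ := 2 * (Real.pi : ℂ) * Complex.I * l with hK
  have hmul : (2 * (Real.pi : ℂ) * Complex.I) * mK = 1 := by
    rw [mK]
    have h1 : (Real.pi : ℂ) ≠ 0 := Complex.ofReal_ne_zero.mpr Real.pi_ne_zero
    field_simp
  have hg : g =ᵐ[volume.restrict (Omega a b)] fun x => K * ft x := by
    filter_upwards [heig] with x hx
    have : (2 * (Real.pi : ℂ) * Complex.I) * (mK * g x)
        = (2 * (Real.pi : ℂ) * Complex.I) * (l * ft x) := by rw [hx]
    calc g x = ((2 * (Real.pi : ℂ) * Complex.I) * mK) * g x := by rw [hmul, one_mul]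
    _ = (2 * (Real.pi : ℂ) * Complex.I) * (mK * g x) := by ring
    _ = (2 * (Real.pi : ℂ) * Complex.I) * (l * ft x) := this
    _ = K * ft x := by ring
  have hft1 : Integrable ft (volume.restrict (Omega a b)) :=
    memLp_one_iff_integrable.mp (MemLp.mono_exponent hD.memL2 (by norm_num))
  have hg1 : Integrable g (volume.restrict (Omega a b)) :=
    memLp_one_iff_integrable.mp (MemLp.mono_exponent hD.derivL2 (by norm_num))
  set c : Fin n → ℂ := fun i =>
    ft ((a i + b i) / 2) * Complex.exp (-K * ((a i + b i) / 2)) with hc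
  -- per-interval analysis
  have key : ∀ i : Fin n, ∀ t ∈ Set.Ioo (a i) (b i),
      ft t = Complex.exp (K * t) * c i := by
    intro i
    set J := Set.Ioo (a i) (b i) with hJ
    have hJm : MeasurableSet J := measurableSet_Ioo
    have hJΩ : J ⊆ Omega a b := subset_omega i
    have hres : (volume.restrict (Omega a b)).restrict J = volume.restrict J := by
      rw [Measure.restrict_restrict hJm, Set.inter_eq_self_of_subset_left hJΩ]
    have hftJ : IntegrableOn ft J volume := by
      rw [IntegrableOn, ← hres]; exact hft1.restrict
    have hgJ : g =ᵐ[volume.restrict J] fun x => K * ft x :=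
      ae_restrict_of_ae_restrict_of_subset hJΩ hg
    have hgJ' : ∀ᵐ u ∂volume, u ∈ J → g u = K * ft u :=
      (ae_restrict_iff' hJm).mp hgJ
    have habi := hab.1 i
    have hgJint : IntegrableOn g J volume := by
      rw [IntegrableOn, ← hres]; exact hg1.restrict
    -- continuity of ft on J
    have hcont : ∀ t ∈ J, ContinuousAt ft t := by
      intro t ht
      obtain ⟨ht1, ht2⟩ := ht
      set x := (a i + t) / 2 with hxdef
      set y := (t + b i) / 2 with hydef
      have hx : x ∈ J := ⟨by rw [hxdef]; linarith, by rw [hxdef]; linarith⟩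
      have hy : y ∈ J := ⟨by rw [hydef]; linarith, by rw [hydef]; linarith⟩
      have hxy : x ≤ y := by rw [hxdef, hydef]; linarith
      have hIcc : Set.uIcc x y ⊆ J := Set.ordConnected_Ioo.uIcc_subset hx hy
      have hprim : ContinuousOn (fun s => ∫ u in x..s, g u) (Set.uIcc x y) :=
        intervalIntegral.continuousOn_primitive_interval (hgJint.mono_set hIcc)
      have heq : Set.EqOn ft (fun s => ft x + ∫ u in x..s, g u) (Set.uIcc x y) := by
        intro s hs
        exact sub_eq_iff_eq_add'.mp (hD.ftc i x hx s (hIcc hs))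
      have hcf : ContinuousOn ft (Set.uIcc x y) :=
        (continuousOn_const.add hprim).congr heq
      refine hcf.continuousAt ?_
      rw [Set.uIcc_of_le hxy]
      exact Icc_mem_nhds (by rw [hxdef]; linarith) (by rw [hydef]; linarith)
    have hcontOn : ContinuousOn ft J := fun t ht => (hcont t ht).continuousWithinAt
    have hKcontOn : ContinuousOn (fun t => K * ft t) J := continuousOn_const.mul hcontOn
    -- differentiability of ft on J
    have hderiv : ∀ t ∈ J, HasDerivAt ft (K * ft t) t := by
      intro t ht
      obtain ⟨ht1, ht2⟩ := ht
      set x := (a i + t) / 2 with hxdef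
      have hx : x ∈ J := ⟨by rw [hxdef]; linarith, by rw [hxdef]; linarith⟩
      have hW : HasDerivAt (fun s => ∫ u in x..s, K * ft u) (K * ft t) t := by
        refine intervalIntegral.integral_hasDerivAt_right ?_ ?_ ?_
        · exact IntegrableOn.intervalIntegrable
            ((hftJ.mono_set (Set.ordConnected_Ioo.uIcc_subset hx ⟨ht1, ht2⟩)).const_mul K)
        · exact hKcontOn.stronglyMeasurableAtFilter isOpen_Ioo t ⟨ht1, ht2⟩
        · exact continuousAt_const.mul (hcont t ⟨ht1, ht2⟩)
      have heqn : ft =ᶠ[nhds t] fun s => ft x + ∫ u in x..s, K * ft u := by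
        filter_upwards [isOpen_Ioo.mem_nhds (show t ∈ J from ⟨ht1, ht2⟩)] with s hs
        have h1 : ft s - ft x = ∫ u in x..s, g u := hD.ftc i x hx s hs
        have h2 : (∫ u in x..s, g u) = ∫ u in x..s, K * ft u := by
          refine intervalIntegral.integral_congr_ae ?_
          have hsub : Set.uIoc x s ⊆ J := by
            refine le_trans Set.Ioc_subset_Icc_self ?_
            rw [← Set.uIcc]
            exact Set.ordConnected_Ioo.uIcc_subset hx hs
          filter_upwards [hgJ'] with u hu hu'
          exact hu (hsub hu')
        rw [← h2]
        exact sub_eq_iff_eq_add'.mp h1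
      exact (hW.const_add (ft x)).congr_of_eventuallyEq heqn
    -- the function ft t * exp (-K t) is constant on J
    have hconst : ∀ t ∈ J, ft t * Complex.exp (-K * t) = c i := by
      have hd0 : ∀ t ∈ J, HasDerivAt (fun s : ℝ => ft s * Complex.exp (-K * s)) 0 t := by
        intro t ht
        have := (hderiv t ht).mul (hasDerivAt_expc (-K) t)
        exact this.congr_deriv (by beta_reduce; ring)
      intro t ht
      have hx0 : (a i + b i) / 2 ∈ J := ⟨by linarith, by linarith⟩
      have hsub : Set.uIcc t ((a i + b i) / 2) ⊆ J :=
        Set.ordConnected_Ioo.uIcc_subset ht hx0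
      have := intervalIntegral.integral_eq_sub_of_hasDerivAt
        (f := fun s : ℝ => ft s * Complex.exp (-K * s)) (f' := fun _ => (0 : ℂ))
        (fun u hu => hd0 u (hsub hu)) (intervalIntegrable_const)
      simp only [intervalIntegral.integral_const, smul_zero] at this
      rw [hc]
      push_cast at this ⊢
      first
      | linear_combination this
      | linear_combination -this
    intro t ht
    have h1 := hconst t ht
    have h2 : Complex.exp (K * t) * Complex.exp (-K * t) = 1 := by
      rw [← Complex.exp_add]
      ring_nf
      exact Complex.exp_zero
    calc ft t = ft t * (Complex.exp (-K * t) * Complex.exp (K * t)) := by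
          rw [mul_comm (Complex.exp (-K * t)), h2, mul_one]
    _ = (ft t * Complex.exp (-K * t)) * Complex.exp (K * t) := by ring
    _ = Complex.exp (K * t) * c i := by rw [h1]; ring
  -- boundary values
  have hexp_cont : Continuous (fun t : ℝ => Complex.exp (K * t)) :=
    Complex.continuous_exp.comp (continuous_const.mul Complex.continuous_ofReal)
  have hfa : ∀ i, fa i = Complex.exp (K * a i) * c i := by
    intro i
    haveI : (nhdsWithin (a i) (Set.Ioo (a i) (b i))).NeBot :=
      left_nhdsWithin_Ioo_neBot (hab.1 i)
    have h1 : Tendsto (fun t : ℝ => Complex.exp (K * t) * c i)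
        (nhdsWithin (a i) (Set.Ioo (a i) (b i)))
        (nhds (Complex.exp (K * a i) * c i)) :=
      ((hexp_cont.tendsto (a i)).mul tendsto_const_nhds).mono_left nhdsWithin_le_nhds
    have h2 : Tendsto ft (nhdsWithin (a i) (Set.Ioo (a i) (b i)))
        (nhds (Complex.exp (K * a i) * c i)) := by
      refine Tendsto.congr' ?_ h1
      filter_upwards [self_mem_nhdsWithin] with t ht
      exact (key i t ht).symm
    exact tendsto_nhds_unique (hD.lim_left i) h2
  have hfb : ∀ i, fb i = Complex.exp (K * b i) * c i := by
    intro i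
    haveI : (nhdsWithin (b i) (Set.Ioo (a i) (b i))).NeBot :=
      right_nhdsWithin_Ioo_neBot (hab.1 i)
    have h1 : Tendsto (fun t : ℝ => Complex.exp (K * t) * c i)
        (nhdsWithin (b i) (Set.Ioo (a i) (b i)))
        (nhds (Complex.exp (K * b i) * c i)) :=
      ((hexp_cont.tendsto (b i)).mul tendsto_const_nhds).mono_left nhdsWithin_le_nhds
    have h2 : Tendsto ft (nhdsWithin (b i) (Set.Ioo (a i) (b i)))
        (nhds (Complex.exp (K * b i) * c i)) := by
      refine Tendsto.congr' ?_ h1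
      filter_upwards [self_mem_nhdsWithin] with t ht
      exact (key i t ht).symm
    exact tendsto_nhds_unique (hD.lim_right i) h2
  refine ⟨c, funext hfa, funext hfb, ?_⟩
  intro x hx
  obtain ⟨i, hxi⟩ := Set.mem_iUnion.mp hx
  rw [formula_eq hab l c hxi]
  exact key i x hxi

end Stmt11Aux

/-- eigenfunctions of `T_B` for the eigenvalue `λ` are exactly the functions
`e^{2πiλx} ∑ cᵢ χ_{Jᵢ}(x)` with `B E(λα⃗) c = E(λβ⃗) c`; in particular the eigenspace has
dimension at most `n`. -/
theorem stmt_11 (n : ℕ) (a b : Fin n → ℝ) (hab : EndpointsOrdered a b)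
    (B : Matrix (Fin n) (Fin n) ℂ)
    (hB : B.conjTranspose * B = 1 ∧ B * B.conjTranspose = 1) (l : ℂ) :
    (∀ f : ℝ → ℂ, MemLp f 2 (volume.restrict (Omega a b)) →
      ((∃ (ft g : ℝ → ℂ) (fa fb : Fin n → ℂ), MemDmax a b ft g fa fb ∧
          B.mulVec fa = fb ∧ ft =ᵐ[volume.restrict (Omega a b)] f ∧
          (fun x => mK * g x) =ᵐ[volume.restrict (Omega a b)] fun x => l * ft x) ↔
        (∃ c : Fin n → ℂ,
          B.mulVec ((expDiag fun i => l * (a i)).mulVec c)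
            = (expDiag fun i => l * (b i)).mulVec c ∧
          f =ᵐ[volume.restrict (Omega a b)] fun x =>
            Complex.exp (2 * (Real.pi : ℂ) * Complex.I * l * x)
              * ∑ i, Set.indicator (Set.Ioo (a i) (b i)) (fun _ => c i) x))) ∧
    (∃ V : Submodule ℂ (Lp ℂ 2 (volume.restrict (Omega a b))),
      (V : Set (Lp ℂ 2 (volume.restrict (Omega a b)))) =
        {F : Lp ℂ 2 (volume.restrict (Omega a b)) | ∃ (ft g : ℝ → ℂ) (fa fb : Fin n → ℂ), MemDmax a b ft g fa fb ∧
          B.mulVec fa = fb ∧ ⇑F =ᵐ[volume.restrict (Omega a b)] ft ∧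
          (fun x => mK * g x) =ᵐ[volume.restrict (Omega a b)] fun x => l * ft x} ∧
      Module.rank ℂ V ≤ n) := by
  classical
  open Stmt11Aux in
  haveI := isFiniteRestrict a b
  set K : ℂ := 2 * (Real.pi : ℂ) * Complex.I * l with hK
  have hmKl : mK * K = l := by
    rw [mK, hK]
    have h1 : (Real.pi : ℂ) ≠ 0 := Complex.ofReal_ne_zero.mpr Real.pi_ne_zero
    field_simp
  -- Part 1
  have main : ∀ f : ℝ → ℂ, MemLp f 2 (volume.restrict (Omega a b)) →
      ((∃ (ft g : ℝ → ℂ) (fa fb : Fin n → ℂ), MemDmax a b ft g fa fb ∧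
          B.mulVec fa = fb ∧ ft =ᵐ[volume.restrict (Omega a b)] f ∧
          (fun x => mK * g x) =ᵐ[volume.restrict (Omega a b)] fun x => l * ft x) ↔
        (∃ c : Fin n → ℂ,
          B.mulVec ((expDiag fun i => l * (a i)).mulVec c)
            = (expDiag fun i => l * (b i)).mulVec c ∧
          f =ᵐ[volume.restrict (Omega a b)] Formula a b l c)) := by
    intro f _hf
    constructor
    · rintro ⟨ft, g, fa, fb, hD, hBfa, hfe, heig⟩
      obtain ⟨c, hfa, hfb, hΩ⟩ := forward hab hD heig
      have ha' : (expDiag fun i => l * (a i)).mulVec c = fa := by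
        rw [mulVec_expDiag, hfa]
        funext i; congr 2; ring
      have hb' : (expDiag fun i => l * (b i)).mulVec c = fb := by
        rw [mulVec_expDiag, hfb]
        funext i; congr 2; ring
      refine ⟨c, by rw [ha', hb']; exact hBfa, ?_⟩
      refine hfe.symm.trans ?_
      filter_upwards [ae_restrict_mem (isOpen_omega a b).measurableSet] with x hx
      exact hΩ x hx
    · rintro ⟨c, hc, hfeq⟩
      refine ⟨Formula a b l c, fun x => K * Formula a b l c x, _, _,
        memDmax_formula hab l c, ?_, hfeq.symm, ?_⟩
      · have := hc
        rw [mulVec_expDiag, mulVec_expDiag] at this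
        have e1 : (fun i => Complex.exp (2 * (Real.pi : ℂ) * Complex.I * (l * a i)) * c i)
            = fun i => Complex.exp (2 * (Real.pi : ℂ) * Complex.I * l * (a i)) * c i := by
          funext i; congr 2; ring
        have e2 : (fun i => Complex.exp (2 * (Real.pi : ℂ) * Complex.I * (l * b i)) * c i)
            = fun i => Complex.exp (2 * (Real.pi : ℂ) * Complex.I * l * (b i)) * c i := by
          funext i; congr 2; ring
        rw [e1, e2] at this
        exact this
      · refine Filter.Eventually.of_forall fun x => ?_
        show mK * (K * Formula a b l c x) = l * Formula a b l c x
        rw [← mul_assoc, hmKl]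
  constructor
  · exact main
  -- Part 2
  · set Smod : Submodule ℂ (Fin n → ℂ) := LinearMap.ker
      ((B.mulVecLin.comp (expDiag fun i => l * (a i)).mulVecLin)
        - (expDiag fun i => l * (b i)).mulVecLin) with hSmod
    have hSmem : ∀ c : Fin n → ℂ, c ∈ Smod ↔
        B.mulVec ((expDiag fun i => l * (a i)).mulVec c)
          = (expDiag fun i => l * (b i)).mulVec c := by
      intro c
      rw [hSmod, LinearMap.mem_ker, LinearMap.sub_apply, LinearMap.comp_apply,
        Matrix.mulVecLin_apply, Matrix.mulVecLin_apply, Matrix.mulVecLin_apply, sub_eq_zero]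
    set L : (Fin n → ℂ) →ₗ[ℂ] Lp ℂ 2 (volume.restrict (Omega a b)) :=
      { toFun := fun c => (memFormula hab l c).toLp (Formula a b l c)
        map_add' := fun c d => by
          rw [← MemLp.toLp_add (memFormula hab l c) (memFormula hab l d)]
          exact (MemLp.toLp_eq_toLp_iff _ _).mpr
            (Filter.EventuallyEq.of_eq (formula_add l c d))
        map_smul' := fun t c => by
          rw [RingHom.id_apply, ← MemLp.toLp_const_smul t (memFormula hab l c)]
          exact MemLp.toLp_congr (memFormula hab l (t • c)) ((memFormula hab l c).const_smul t)
            (Filter.EventuallyEq.of_eq (formula_smul l t c)) } with hL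
    refine ⟨Submodule.map L Smod, ?_, ?_⟩
    · apply Set.ext
      intro F
      simp only [SetLike.mem_coe, Submodule.mem_map, Set.mem_setOf_eq]
      constructor
      · rintro ⟨c, hcS, rfl⟩
        have hcoe : ⇑(L c) =ᵐ[volume.restrict (Omega a b)] Formula a b l c :=
          MemLp.coeFn_toLp (memFormula hab l c)
        obtain ⟨ft, g, fa, fb, h1, h2, h3, h4⟩ :=
          (main (⇑(L c)) (Lp.memLp (L c))).mpr ⟨c, (hSmem c).mp hcS, hcoe⟩
        exact ⟨ft, g, fa, fb, h1, h2, h3.symm, h4⟩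
      · rintro ⟨ft, g, fa, fb, h1, h2, h3, h4⟩
        obtain ⟨c, hcc, hFeq⟩ :=
          (main (⇑F) (Lp.memLp F)).mp ⟨ft, g, fa, fb, h1, h2, h3.symm, h4⟩
        refine ⟨c, (hSmem c).mpr hcc, ?_⟩
        have h5 : (memFormula hab l c).toLp (Formula a b l c)
            = (Lp.memLp F).toLp ⇑F :=
          (MemLp.toLp_eq_toLp_iff _ _).mpr hFeq.symm
        rw [Lp.toLp_coeFn] at h5
        exact h5
    · calc Module.rank ℂ (Submodule.map L Smod) ≤ Module.rank ℂ Smod :=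
            rank_map_le L Smod
      _ ≤ Module.rank ℂ (Fin n → ℂ) := Submodule.rank_le Smod
      _ = n := rank_fin_fun n
end
end

section
/- Assume Ω is spectral with spectrum Λ. Then span{e_λ(α⃗) : λ ∈ Λ} = span{e_λ(β⃗) : λ ∈ Λ} = ℂⁿ, and there exists a unique unitary matrix B on ℂⁿ satisfying B e_λ(α⃗) = e_λ(β⃗) for all λ ∈ Λ; moreover, this B is a spectral boundary matrix. -/
open MeasureTheory Complex Filter

noncomputable section

namespace S15

def Kc : ℂ := 2 * (Real.pi : ℂ) * Complex.I

lemma Kc_def : Kc = 2 * (Real.pi : ℂ) * Complex.I := rfl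

lemma Kc_ne_zero : Kc ≠ 0 := by
  simp [Kc, Real.pi_ne_zero, Complex.I_ne_zero, Complex.ofReal_ne_zero]

lemma Kc_mul_ne_zero {μ : ℝ} (h : μ ≠ 0) : Kc * (μ : ℂ) ≠ 0 :=
  mul_ne_zero Kc_ne_zero (Complex.ofReal_ne_zero.2 h)

lemma eFun_eq (l x : ℝ) : eFun l x = Complex.exp (Kc * ((l : ℂ) * (x : ℂ))) := by
  unfold eFun Kc; ring_nf

lemma eFun_eq' (l x : ℝ) : eFun l x = Complex.exp (((2 * Real.pi * l * x : ℝ) : ℂ) * Complex.I) := by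
  unfold eFun; congr 1; push_cast; ring

lemma norm_eFun (l x : ℝ) : ‖eFun l x‖ = 1 := by
  rw [eFun_eq', Complex.norm_exp_ofReal_mul_I]

lemma eFun_ne_zero (l x : ℝ) : eFun l x ≠ 0 := by
  unfold eFun; exact Complex.exp_ne_zero _

lemma star_eFun (l x : ℝ) : star (eFun l x) = Complex.exp (-(Kc * ((l : ℂ) * (x : ℂ)))) := by
  rw [eFun_eq, Complex.star_def, ← Complex.exp_conj]
  congr 1
  rw [Kc]
  simp only [map_mul, Complex.conj_I, Complex.conj_ofReal, map_ofNat]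
  ring

lemma conj_eFun_mul (l l₀ x : ℝ) :
    star (eFun l x) * eFun l₀ x = Complex.exp (Kc * (((l₀ - l : ℝ) : ℂ) * (x : ℂ))) := by
  rw [star_eFun, eFun_eq, ← Complex.exp_add]
  congr 1
  push_cast
  ring

lemma eFun_mul_star (l l' x : ℝ) :
    eFun l x * star (eFun l' x) = Complex.exp (Kc * (((l - l' : ℝ) : ℂ) * (x : ℂ))) := by
  rw [mul_comm]; exact conj_eFun_mul l' l x

lemma continuous_expKc (μ : ℝ) : Continuous fun x : ℝ => Complex.exp (Kc * ((μ : ℂ) * (x : ℂ))) :=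
  Complex.continuous_exp.comp <| (continuous_const.mul (continuous_const.mul Complex.continuous_ofReal))

lemma continuous_eFun (l : ℝ) : Continuous (eFun l) := by
  have : eFun l = fun x : ℝ => Complex.exp (Kc * ((l : ℂ) * (x : ℂ))) := funext fun x => eFun_eq l x
  rw [this]; exact continuous_expKc l

/-! ### interval integral of exponentials -/

lemma intervalIntegral_expKc_ne (p q : ℝ) {μ : ℝ} (h : μ ≠ 0) :
    ∫ x : ℝ in p..q, Complex.exp (Kc * ((μ : ℂ) * (x : ℂ)))
      = (Complex.exp (Kc * (μ * q)) - Complex.exp (Kc * (μ * p))) / (Kc * μ) := by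
  have h1 : ∀ x : ℝ, Kc * ((μ : ℂ) * (x : ℂ)) = (Kc * μ) * (x : ℂ) := fun x => by ring
  simp_rw [h1]
  rw [integral_exp_mul_complex (Kc_mul_ne_zero h)]

lemma intervalIntegral_expKc_zero (p q : ℝ) :
    ∫ x : ℝ in p..q, Complex.exp (Kc * (((0 : ℝ) : ℂ) * (x : ℂ))) = ((q - p : ℝ) : ℂ) := by
  simp

end S15
namespace S15

variable {n : ℕ} {a b : Fin n → ℝ}

lemma measurableSet_Omega : MeasurableSet (Omega a b) :=
  MeasurableSet.iUnion fun _ => measurableSet_Ioo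

lemma volume_Omega_lt_top : volume (Omega a b) < ⊤ := by
  refine lt_of_le_of_lt (measure_iUnion_le _) ?_
  rw [tsum_fintype]
  exact ENNReal.sum_lt_top.2 fun i _ => measure_Ioo_lt_top

lemma isFiniteMeasure_restrictOmega :
    IsFiniteMeasure (volume.restrict (Omega a b)) :=
  ⟨by rw [Measure.restrict_apply_univ]; exact volume_Omega_lt_top⟩

lemma Ioo_subset_Omega (i : Fin n) : Set.Ioo (a i) (b i) ⊆ Omega a b :=
  Set.subset_iUnion (fun i => Set.Ioo (a i) (b i)) i

lemma disjoint_Ioo (hab : EndpointsOrdered a b) :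
    Pairwise (Function.onFun Disjoint fun i => Set.Ioo (a i) (b i)) := by
  have key : ∀ i j : Fin n, i < j → Disjoint (Set.Ioo (a i) (b i)) (Set.Ioo (a j) (b j)) := by
    intro i j hij
    rw [Set.disjoint_left]
    intro x hx hx'
    exact absurd (hx.2.trans (hab.2 i j hij)) (not_lt.2 hx'.1.le)
  intro i j hij
  rcases lt_or_gt_of_ne hij with h | h
  · exact key i j h
  · exact (key j i h).symm

/-- The piecewise exponential function `x ↦ ∑ i, c i · e_{λ₀}(x) · 1_{(p i, q i)}(x)`. -/
def pcw (p q : Fin n → ℝ) (c : Fin n → ℂ) (l₀ : ℝ) : ℝ → ℂ :=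
  fun x => ∑ i, Set.indicator (Set.Ioo (p i) (q i)) (fun y => c i * eFun l₀ y) x

lemma aestronglyMeasurable_pcw (p q : Fin n → ℝ) (c : Fin n → ℂ) (l₀ : ℝ)
    (μ : Measure ℝ) : AEStronglyMeasurable (pcw p q c l₀) μ := by
  apply Finset.aestronglyMeasurable_fun_sum
  intro i _
  exact ((continuous_const.mul (continuous_eFun l₀)).aestronglyMeasurable).indicator
    measurableSet_Ioo

lemma memLp_pcw (p q : Fin n → ℝ) (c : Fin n → ℂ) (l₀ : ℝ) :
    MemLp (pcw p q c l₀) 2 (volume.restrict (Omega a b)) := by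
  haveI := isFiniteMeasure_restrictOmega (a := a) (b := b)
  refine MemLp.of_bound (aestronglyMeasurable_pcw p q c l₀ _) (∑ i, ‖c i‖) ?_
  refine Filter.Eventually.of_forall fun x => ?_
  refine le_trans (norm_sum_le _ _) (Finset.sum_le_sum fun i _ => ?_)
  refine le_trans (norm_indicator_le_norm_self _ _) ?_
  rw [norm_mul, norm_eFun, mul_one]

lemma integrableOn_expKc_restrict (μ₀ : ℝ) (ci : ℂ) (p q : ℝ) :
    Integrable (Set.indicator (Set.Ioo p q) fun y => ci * Complex.exp (Kc * ((μ₀ : ℂ) * (y : ℂ))))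
      (volume.restrict (Omega a b)) := by
  rw [integrable_indicator_iff measurableSet_Ioo]
  have h1 : IntegrableOn (fun y : ℝ => ci * Complex.exp (Kc * ((μ₀ : ℂ) * (y : ℂ))))
      (Set.Ioo p q) volume := by
    refine IntegrableOn.mono_set ?_ Set.Ioo_subset_Ioc_self
    exact (continuous_const.mul (continuous_expKc μ₀)).integrableOn_Ioc
  unfold IntegrableOn
  rw [Measure.restrict_restrict measurableSet_Ioo]
  exact h1.mono_set Set.inter_subset_left

/-- The central integral computation, sloppy version with indicators. -/
lemma integral_conj_eFun_mul_pcw (p q : Fin n → ℝ) (c : Fin n → ℂ) (l₀ l : ℝ)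
    (hle : ∀ i, p i ≤ q i) (hsub : ∀ i, Set.Ioo (p i) (q i) ⊆ Omega a b) :
    ∫ x in Omega a b, star (eFun l x) * pcw p q c l₀ x
      = ∑ i, c i * ∫ x in (p i)..(q i), Complex.exp (Kc * (((l₀ - l : ℝ) : ℂ) * (x : ℂ))) := by
  have hpt : ∀ x : ℝ, star (eFun l x) * pcw p q c l₀ x
      = ∑ i, Set.indicator (Set.Ioo (p i) (q i))
          (fun y => c i * Complex.exp (Kc * (((l₀ - l : ℝ) : ℂ) * (y : ℂ)))) x := by
    intro x
    rw [pcw, Finset.mul_sum]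
    refine Finset.sum_congr rfl fun i _ => ?_
    by_cases hx : x ∈ Set.Ioo (p i) (q i)
    · rw [Set.indicator_of_mem hx, Set.indicator_of_mem hx, mul_left_comm, conj_eFun_mul]
    · simp [Set.indicator_of_notMem hx]
  simp_rw [hpt]
  rw [integral_finset_sum _ (fun i _ => integrableOn_expKc_restrict (l₀ - l) (c i) (p i) (q i))]
  refine Finset.sum_congr rfl fun i _ => ?_
  rw [integral_indicator measurableSet_Ioo, Measure.restrict_restrict measurableSet_Ioo,
    Set.inter_eq_self_of_subset_left (hsub i), MeasureTheory.integral_const_mul (c i) _]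
  congr 1
  rw [intervalIntegral.integral_of_le (hle i), integral_Ioc_eq_integral_Ioo]

/-- If the piecewise function vanishes a.e. on `Ω`, all coefficients vanish. -/
lemma pcw_ae_zero_coeffs (hab : EndpointsOrdered a b) (p q : Fin n → ℝ) (c : Fin n → ℂ) (l₀ : ℝ)
    (hpq : ∀ i, p i < q i) (hsub : ∀ i, Set.Ioo (p i) (q i) ⊆ Set.Ioo (a i) (b i))
    (h0 : pcw p q c l₀ =ᵐ[volume.restrict (Omega a b)] 0) :
    ∀ i, c i = 0 := by
  intro i
  have hsubΩ : Set.Ioo (p i) (q i) ⊆ Omega a b := (hsub i).trans (Ioo_subset_Omega i)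
  have h1 : pcw p q c l₀ =ᵐ[volume.restrict (Set.Ioo (p i) (q i))] 0 :=
    ae_restrict_of_ae_restrict_of_subset hsubΩ h0
  have h2 : ∀ᵐ x ∂(volume.restrict (Set.Ioo (p i) (q i))), x ∈ Set.Ioo (p i) (q i) :=
    ae_restrict_mem measurableSet_Ioo
  have hne : (volume.restrict (Set.Ioo (p i) (q i))) ≠ 0 := by
    rw [Ne, Measure.restrict_eq_zero, Real.volume_Ioo]
    simp [sub_pos, hpq i, ne_of_gt]
  haveI : Filter.NeBot (ae (volume.restrict (Set.Ioo (p i) (q i)))) :=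
    MeasureTheory.ae_neBot.2 hne
  obtain ⟨x, hfx, hxmem⟩ := (h1.and h2).exists
  have hval : pcw p q c l₀ x = c i * eFun l₀ x := by
    rw [pcw]
    rw [Finset.sum_eq_single i]
    · rw [Set.indicator_of_mem hxmem]
    · intro j _ hji
      have hxj : x ∉ Set.Ioo (p j) (q j) := by
        intro hmem
        exact Set.disjoint_left.1 (disjoint_Ioo hab (Ne.symm hji)) (hsub i hxmem) (hsub j hmem)
      exact Set.indicator_of_notMem hxj _
    · intro h; exact absurd (Finset.mem_univ i) h
  rw [hval] at hfx
  have := eFun_ne_zero l₀ x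
  exact (mul_eq_zero.1 hfx).resolve_right this

end S15
namespace S15

variable {n : ℕ} {a b : Fin n → ℝ}

/-- Integral over `Ω` of a continuous function decomposes as a sum of interval integrals. -/
lemma integral_Omega_eq_sum (hab : EndpointsOrdered a b) (g : ℝ → ℂ) (hg : Continuous g) :
    ∫ x in Omega a b, g x = ∑ i, ∫ x in (a i)..(b i), g x := by
  have hint : IntegrableOn g (⋃ i, Set.Ioo (a i) (b i)) volume := by
    refine (integrableOn_finite_iUnion).2 fun i => ?_
    exact (hg.integrableOn_Ioc).mono_set Set.Ioo_subset_Ioc_self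
  rw [Omega, integral_iUnion (fun _ => measurableSet_Ioo) (disjoint_Ioo hab) hint, tsum_fintype]
  refine Finset.sum_congr rfl fun i _ => ?_
  rw [intervalIntegral.integral_of_le (hab.1 i).le, integral_Ioc_eq_integral_Ioo]

/-- Completeness: a function in `L²(Ω)` orthogonal to all `e_λ`, `λ ∈ Λ`, vanishes a.e. -/
lemma ae_zero_of_orthogonal {Λ : Set ℝ}
    (hcl : (Submodule.span ℂ {F : Lp ℂ 2 (volume.restrict (Omega a b)) |
      ∃ l ∈ Λ, ⇑F =ᵐ[volume.restrict (Omega a b)] eFun l}).topologicalClosure = ⊤)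
    (f : ℝ → ℂ) (hf : MemLp f 2 (volume.restrict (Omega a b)))
    (h : ∀ l ∈ Λ, ∫ x in Omega a b, star (eFun l x) * f x = 0) :
    f =ᵐ[volume.restrict (Omega a b)] 0 := by
  set μ := volume.restrict (Omega a b) with hμ
  set S : Set (Lp ℂ 2 μ) := {F : Lp ℂ 2 μ | ∃ l ∈ Λ, ⇑F =ᵐ[μ] eFun l} with hS
  set v : Lp ℂ 2 μ := hf.toLp f with hv
  have hv0 : v = 0 := by
    have horth : v ∈ (Submodule.span ℂ S)ᗮ := by
      rw [Submodule.mem_orthogonal]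
      intro u hu
      induction hu using Submodule.span_induction with
      | mem u hu =>
        obtain ⟨l, hl, hul⟩ := hu
        have h1 : (inner ℂ u v : ℂ) = ∫ x, star (u x) * v x ∂μ := by
          rw [MeasureTheory.L2.inner_def]
          congr 1
          funext x; rw [RCLike.inner_apply]; simp only [Complex.star_def]; ring
        rw [h1]
        have h2 : ∫ x, star (u x) * v x ∂μ = ∫ x, star (eFun l x) * f x ∂μ := by
          refine integral_congr_ae ?_
          filter_upwards [hul, hf.coeFn_toLp] with x e1 e2
          rw [e1, e2]
        rw [h2]
        exact h l hl
      | zero => exact inner_zero_left v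
      | add u w _ _ ihu ihw => rw [inner_add_left, ihu, ihw, add_zero]
      | smul t u _ ihu => rw [inner_smul_left, ihu, mul_zero]
    rw [Submodule.topologicalClosure_eq_top_iff.1 hcl] at horth
    exact Submodule.mem_bot ℂ |>.1 horth
  calc f =ᵐ[μ] ⇑v := hf.coeFn_toLp.symm
  _ =ᵐ[μ] 0 := by rw [hv0]; exact MeasureTheory.Lp.coeFn_zero ℂ 2 μ

end S15
namespace S15

variable {n : ℕ}

lemma cdot_add_left (u u' v : Fin n → ℂ) : cdot (u + u') v = cdot u v + cdot u' v := by
  unfold cdot; rw [← Finset.sum_add_distrib]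
  exact Finset.sum_congr rfl fun i _ => by simp [add_mul]

lemma cdot_smul_left (t : ℂ) (u v : Fin n → ℂ) : cdot (t • u) v = t * cdot u v := by
  unfold cdot; rw [Finset.mul_sum]
  exact Finset.sum_congr rfl fun i _ => by simp [mul_assoc]

lemma cdot_smul_right (t : ℂ) (u v : Fin n → ℂ) : cdot u (t • v) = star t * cdot u v := by
  unfold cdot; rw [Finset.mul_sum]
  exact Finset.sum_congr rfl fun i _ => by simp [star_mul']; ring

lemma cdot_zero_left (v : Fin n → ℂ) : cdot 0 v = 0 := by simp [cdot]

lemma cdot_sum_left {ι : Type*} (s : Finset ι) (f : ι → Fin n → ℂ) (v : Fin n → ℂ) :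
    cdot (∑ l ∈ s, f l) v = ∑ l ∈ s, cdot (f l) v := by
  unfold cdot
  rw [Finset.sum_comm]
  exact Finset.sum_congr rfl fun i _ => by rw [Finset.sum_apply, Finset.sum_mul]

lemma cdot_sum_right {ι : Type*} (s : Finset ι) (v : Fin n → ℂ) (f : ι → Fin n → ℂ) :
    cdot v (∑ l ∈ s, f l) = ∑ l ∈ s, cdot v (f l) := by
  unfold cdot
  rw [Finset.sum_comm]
  refine Finset.sum_congr rfl fun i _ => ?_
  rw [Finset.sum_apply, star_sum, Finset.mul_sum]

lemma cdot_sum_sum {ι : Type*} (s : Finset ι) (x y : ι → ℂ) (v w : ι → Fin n → ℂ) :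
    cdot (∑ l ∈ s, x l • v l) (∑ m ∈ s, y m • w m)
      = ∑ l ∈ s, ∑ m ∈ s, x l * star (y m) * cdot (v l) (w m) := by
  rw [cdot_sum_left]
  refine Finset.sum_congr rfl fun l _ => ?_
  rw [cdot_smul_left, cdot_sum_right, Finset.mul_sum]
  refine Finset.sum_congr rfl fun m _ => ?_
  rw [cdot_smul_right]
  ring

lemma eq_zero_of_cdot_self (v : Fin n → ℂ) (h : cdot v v = 0) : v = 0 := by
  have h1 : cdot v v = ((∑ i, Complex.normSq (v i) : ℝ) : ℂ) := by
    unfold cdot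
    push_cast
    exact Finset.sum_congr rfl fun i _ => (Complex.mul_conj (v i))
  rw [h1] at h
  have h2 : (∑ i, Complex.normSq (v i) : ℝ) = 0 := by exact_mod_cast h
  funext i
  have h3 := (Finset.sum_eq_zero_iff_of_nonneg fun j _ => Complex.normSq_nonneg (v j)).1 h2 i
    (Finset.mem_univ i)
  exact Complex.normSq_eq_zero.1 h3

lemma mulVec_eq_sum_smul_col (B : Matrix (Fin n) (Fin n) ℂ) (u : Fin n → ℂ) :
    B.mulVec u = ∑ m, u m • (fun k => B k m) := by
  funext k
  rw [Finset.sum_apply]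
  simp [Matrix.mulVec, dotProduct, mul_comm]

lemma cdot_col_col (B : Matrix (Fin n) (Fin n) ℂ) (m p : Fin n) :
    cdot (fun k => B k m) (fun k => B k p) = (B.conjTranspose * B) p m := by
  unfold cdot
  rw [Matrix.mul_apply]
  exact Finset.sum_congr rfl fun k _ => by
    rw [Matrix.conjTranspose_apply]; ring

lemma cdot_mulVec_of_unitary {B : Matrix (Fin n) (Fin n) ℂ} (h : B.conjTranspose * B = 1)
    (u v : Fin n → ℂ) : cdot (B.mulVec u) (B.mulVec v) = cdot u v := by
  rw [mulVec_eq_sum_smul_col, mulVec_eq_sum_smul_col, cdot_sum_sum]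
  have h1 : ∀ m p : Fin n, cdot (fun k => B k m) (fun k => B k p) = if p = m then 1 else 0 := by
    intro m p
    rw [cdot_col_col, h, Matrix.one_apply]
  simp_rw [h1]
  rw [Finset.sum_comm]
  unfold cdot
  refine Finset.sum_congr rfl fun m _ => ?_
  simp [mul_ite, Finset.sum_ite_eq, Finset.mem_univ]

lemma unitary_of_cdot_preserving {B : Matrix (Fin n) (Fin n) ℂ}
    (h : ∀ u v : Fin n → ℂ, cdot (B.mulVec u) (B.mulVec v) = cdot u v) :
    B.conjTranspose * B = 1 := by
  ext i j
  have h1 := h (Pi.single j 1) (Pi.single i 1)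
  rw [Matrix.mulVec_single, Matrix.mulVec_single] at h1
  have h2 : cdot (fun k => B k j * 1) (fun k => B k i * 1) = (B.conjTranspose * B) i j := by
    unfold cdot
    rw [Matrix.mul_apply]
    exact Finset.sum_congr rfl fun k _ => by rw [Matrix.conjTranspose_apply]; ring_nf
  have h3 : cdot (Pi.single j (1:ℂ)) (Pi.single i 1) = (1 : Matrix (Fin n) (Fin n) ℂ) i j := by
    unfold cdot
    rw [Matrix.one_apply]
    simp [Pi.single_apply, Finset.sum_ite_eq, eq_comm]
  have e : ∀ m, (MulOpposite.op (1:ℂ) • B.col m) = fun k => B k m * 1 := fun m => by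
    ext k; simp [Matrix.col]
  rw [e, e] at h1
  rw [h2, h3] at h1
  exact h1

end S15
namespace S15

variable {n : ℕ} {a b : Fin n → ℝ} {Λ : Set ℝ}

/-- Gram identity: for `l, l' ∈ Λ`, the boundary exponential sums at `a` and `b` agree. -/
lemma gram_sum (hab : EndpointsOrdered a b)
    (horth : ∀ l ∈ Λ, ∀ l' ∈ Λ, l ≠ l' →
      ∫ x in Omega a b, eFun l x * star (eFun l' x) = 0)
    {l l' : ℝ} (hl : l ∈ Λ) (hl' : l' ∈ Λ) :
    ∑ i, Complex.exp (Kc * (((l - l' : ℝ) : ℂ) * ((b i : ℝ) : ℂ)))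
      = ∑ i, Complex.exp (Kc * (((l - l' : ℝ) : ℂ) * ((a i : ℝ) : ℂ))) := by
  by_cases h : l = l'
  · subst h; simp
  · have hμ : l - l' ≠ 0 := sub_ne_zero.2 h
    have h0 := horth l hl l' hl' h
    have hpt : ∀ x : ℝ, eFun l x * star (eFun l' x)
        = Complex.exp (Kc * (((l - l' : ℝ) : ℂ) * (x : ℂ))) := fun x => eFun_mul_star l l' x
    simp_rw [hpt] at h0
    rw [integral_Omega_eq_sum hab _ (continuous_expKc (l - l'))] at h0
    simp_rw [intervalIntegral_expKc_ne _ _ hμ] at h0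
    rw [← Finset.sum_div, Finset.sum_sub_distrib] at h0
    have h1 := (div_eq_zero_iff.1 h0).resolve_right (Kc_mul_ne_zero hμ)
    exact sub_eq_zero.1 h1

/-- Sum of weighted interval integrals of exponentials over shifted intervals factors. -/
lemma sum_mul_intervalIntegral (r : Fin n → ℝ) (s₀ s₁ : ℝ) (c : Fin n → ℂ) {μ : ℝ} (hμ : μ ≠ 0) :
    ∑ i, c i * ∫ x in (r i + s₀)..(r i + s₁), Complex.exp (Kc * ((μ : ℂ) * (x : ℂ)))
      = (∑ i, c i * Complex.exp (Kc * ((μ : ℂ) * ((r i : ℝ) : ℂ))))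
        * ((Complex.exp (Kc * ((μ : ℂ) * (s₁ : ℂ))) - Complex.exp (Kc * ((μ : ℂ) * (s₀ : ℂ))))
            / (Kc * μ)) := by
  rw [Finset.sum_mul]
  refine Finset.sum_congr rfl fun i _ => ?_
  rw [intervalIntegral_expKc_ne _ _ hμ]
  have e1 : Complex.exp (Kc * ((μ : ℂ) * ((r i + s₁ : ℝ) : ℂ)))
      = Complex.exp (Kc * ((μ : ℂ) * ((r i : ℝ) : ℂ))) * Complex.exp (Kc * ((μ : ℂ) * (s₁ : ℂ))) := by
    rw [← Complex.exp_add]; congr 1; push_cast; ring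
  have e2 : Complex.exp (Kc * ((μ : ℂ) * ((r i + s₀ : ℝ) : ℂ)))
      = Complex.exp (Kc * ((μ : ℂ) * ((r i : ℝ) : ℂ))) * Complex.exp (Kc * ((μ : ℂ) * (s₀ : ℂ))) := by
    rw [← Complex.exp_add]; congr 1; push_cast; ring
  rw [e1, e2]
  ring

/-- If a vector of coefficients annihilates all the boundary vectors `e_λ(r)`, `λ ∈ Λ`,
it must vanish (using spectrality). -/
lemma coeffs_zero_of_vanishing (hab : EndpointsOrdered a b) (hspec : IsSpectral a b Λ)
    (r : Fin n → ℝ) (s₀ s₁ : ℝ) (hs : s₀ < s₁)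
    (hsub : ∀ i, Set.Ioo (r i + s₀) (r i + s₁) ⊆ Set.Ioo (a i) (b i))
    (d : Fin n → ℂ) (hvan : ∀ l ∈ Λ, ∑ i, eFun l (r i) * d i = 0) :
    ∀ i, d i = 0 := by
  set p : Fin n → ℝ := fun i => r i + s₀ with hp
  set q : Fin n → ℝ := fun i => r i + s₁ with hq
  set c : Fin n → ℂ := fun i => star (d i) with hc
  have hle : ∀ i, p i ≤ q i := fun i => by simp [hp, hq, hs.le]
  have hsubΩ : ∀ i, Set.Ioo (p i) (q i) ⊆ Omega a b :=
    fun i => (hsub i).trans (Ioo_subset_Omega i)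
  have hint : ∀ l ∈ Λ, ∫ x in Omega a b, star (eFun l x) * pcw p q c 0 x = 0 := by
    intro l hl
    rw [integral_conj_eFun_mul_pcw p q c 0 l hle hsubΩ]
    have hstar : ∀ i, Complex.exp (Kc * (((0 - l : ℝ) : ℂ) * ((r i : ℝ) : ℂ)))
        = star (eFun l (r i)) := by
      intro i
      rw [star_eFun]
      congr 1
      push_cast
      ring
    by_cases hl0 : l = 0
    · subst hl0
      have : ((0 : ℝ) - 0) = (0 : ℝ) := by norm_num
      simp_rw [this]
      simp_rw [intervalIntegral_expKc_zero]
      have : ∀ i, ((q i - p i : ℝ) : ℂ) = ((s₁ - s₀ : ℝ) : ℂ) := fun i => by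
        congr 1; simp only [hp, hq]; ring
      simp_rw [this, ← Finset.sum_mul]
      have hv := hvan 0 hl
      have hc0 : ∑ i, c i = 0 := by
        have : ∑ i, c i = star (∑ i, eFun 0 (r i) * d i) := by
          rw [star_sum]
          refine Finset.sum_congr rfl fun i _ => ?_
          have h1 : eFun 0 (r i) = 1 := by simp [eFun]
          rw [star_mul', h1]
          simp [hc]
        rw [this, hv, star_zero]
      rw [hc0, zero_mul]
    · have hμ : (0 : ℝ) - l ≠ 0 := by simpa using hl0
      rw [show p = fun i => r i + s₀ from rfl, show q = fun i => r i + s₁ from rfl]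
      rw [sum_mul_intervalIntegral r s₀ s₁ c hμ]
      have hz : ∑ i, c i * Complex.exp (Kc * (((0 - l : ℝ) : ℂ) * ((r i : ℝ) : ℂ))) = 0 := by
        have : ∑ i, c i * Complex.exp (Kc * (((0 - l : ℝ) : ℂ) * ((r i : ℝ) : ℂ)))
            = star (∑ i, eFun l (r i) * d i) := by
          rw [star_sum]
          refine Finset.sum_congr rfl fun i _ => ?_
          rw [star_mul', ← hstar i]
          simp only [hc]
          exact mul_comm _ _
        rw [this, hvan l hl, star_zero]
      rw [hz, zero_mul]
  have hae := ae_zero_of_orthogonal hspec.2 _ (memLp_pcw p q c 0) hint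
  have hc0 := pcw_ae_zero_coeffs hab p q c 0 (fun i => by simp [hp, hq, hs]) hsub hae
  intro i
  have := hc0 i
  rw [hc] at this
  simpa using this

/-- The boundary vectors span `ℂⁿ`. -/
lemma span_eVec_eq_top (hab : EndpointsOrdered a b) (hspec : IsSpectral a b Λ)
    (r : Fin n → ℝ) (s₀ s₁ : ℝ) (hs : s₀ < s₁)
    (hsub : ∀ i, Set.Ioo (r i + s₀) (r i + s₁) ⊆ Set.Ioo (a i) (b i)) :
    Submodule.span ℂ ((fun l : ℝ => fun i => eFun l (r i)) '' Λ) = ⊤ := by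
  by_contra hne
  obtain ⟨φ, hφne, hφmap⟩ :=
    Submodule.exists_dual_map_eq_bot_of_lt_top (lt_top_iff_ne_top.2 hne) inferInstance
  set d : Fin n → ℂ := fun i => φ (fun j => if i = j then 1 else 0) with hd
  have hφapp : ∀ v : Fin n → ℂ, φ v = ∑ i, v i * d i := by
    intro v
    rw [LinearMap.pi_apply_eq_sum_univ φ v]
    exact Finset.sum_congr rfl fun i _ => by rw [smul_eq_mul]
  have hvan : ∀ l ∈ Λ, ∑ i, eFun l (r i) * d i = 0 := by
    intro l hl
    rw [← hφapp]
    have hmem : (fun i => eFun l (r i))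
        ∈ Submodule.span ℂ ((fun l : ℝ => fun i => eFun l (r i)) '' Λ) :=
      Submodule.subset_span ⟨l, hl, rfl⟩
    have h2 : φ (fun i => eFun l (r i)) ∈ Submodule.map φ
        (Submodule.span ℂ ((fun l : ℝ => fun i => eFun l (r i)) '' Λ)) :=
      Submodule.mem_map_of_mem hmem
    rw [hφmap] at h2
    exact (Submodule.mem_bot ℂ).1 h2
  have hd0 := coeffs_zero_of_vanishing hab hspec r s₀ s₁ hs hsub d hvan
  apply hφne
  apply LinearMap.ext
  intro v
  rw [hφapp]
  simp only [LinearMap.zero_apply]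
  refine Finset.sum_eq_zero fun i _ => ?_
  rw [hd0 i, mul_zero]

end S15
namespace S15

variable {n : ℕ} {a b : Fin n → ℝ} {Λ : Set ℝ}

lemma linearCombination_eq_sum (v : ℝ → (Fin n → ℂ)) (u : ℝ →₀ ℂ) (s : Finset ℝ)
    (hs : u.support ⊆ s) :
    Finsupp.linearCombination ℂ v u = ∑ l ∈ s, u l • v l := by
  rw [Finsupp.linearCombination_apply]
  exact Finsupp.sum_of_support_subset u hs _ (fun l _ => zero_smul ℂ _)

lemma cdot_lc (v w : ℝ → (Fin n → ℂ))
    (hgram : ∀ l ∈ Λ, ∀ m ∈ Λ, cdot (v l) (v m) = cdot (w l) (w m))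
    (u u' : ℝ →₀ ℂ) (hu : ↑u.support ⊆ Λ) (hu' : ↑u'.support ⊆ Λ) :
    cdot (Finsupp.linearCombination ℂ v u) (Finsupp.linearCombination ℂ v u')
      = cdot (Finsupp.linearCombination ℂ w u) (Finsupp.linearCombination ℂ w u') := by
  set s : Finset ℝ := u.support ∪ u'.support with hsdef
  have h1 : u.support ⊆ s := Finset.subset_union_left
  have h2 : u'.support ⊆ s := Finset.subset_union_right
  rw [linearCombination_eq_sum v u s h1, linearCombination_eq_sum v u' s h2,
    linearCombination_eq_sum w u s h1, linearCombination_eq_sum w u' s h2,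
    cdot_sum_sum, cdot_sum_sum]
  refine Finset.sum_congr rfl fun l hl => Finset.sum_congr rfl fun m hm => ?_
  have hlΛ : l ∈ Λ := by
    rcases Finset.mem_union.1 hl with h | h
    · exact hu h
    · exact hu' h
  have hmΛ : m ∈ Λ := by
    rcases Finset.mem_union.1 hm with h | h
    · exact hu h
    · exact hu' h
  rw [hgram l hlΛ m hmΛ]

/-- Existence of the unitary boundary matrix. -/
lemma exists_unitary
    (hgram : ∀ l ∈ Λ, ∀ m ∈ Λ,
      cdot ((fun i => eFun l (a i)) : Fin n → ℂ) (fun i => eFun m (a i))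
        = cdot ((fun i => eFun l (b i)) : Fin n → ℂ) (fun i => eFun m (b i)))
    (hspanA : Submodule.span ℂ ((fun l : ℝ => fun i => eFun l (a i)) '' Λ) = ⊤) :
    ∃ B : Matrix (Fin n) (Fin n) ℂ,
      (B.conjTranspose * B = 1 ∧ B * B.conjTranspose = 1) ∧
      ∀ l ∈ Λ, B.mulVec (fun i => eFun l (a i)) = fun i => eFun l (b i) := by
  set vA : ℝ → (Fin n → ℂ) := fun l => fun i => eFun l (a i) with hvA
  set vB : ℝ → (Fin n → ℂ) := fun l => fun i => eFun l (b i) with hvB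
  set Tα : (ℝ →₀ ℂ) →ₗ[ℂ] (Fin n → ℂ) := Finsupp.linearCombination ℂ vA with hTα
  set Tβ : (ℝ →₀ ℂ) →ₗ[ℂ] (Fin n → ℂ) := Finsupp.linearCombination ℂ vB with hTβ
  set W : Submodule ℂ (ℝ →₀ ℂ) := Finsupp.supported ℂ ℂ Λ with hW
  set Dα : W →ₗ[ℂ] (Fin n → ℂ) := Tα ∘ₗ W.subtype with hDα
  have hrange : LinearMap.range Dα = ⊤ := by
    rw [hDα, LinearMap.range_comp, Submodule.range_subtype, hTα, hW,
      ← Finsupp.span_image_eq_map_linearCombination]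
    exact hspanA
  obtain ⟨σ, hσ⟩ := Dα.exists_rightInverse_of_surjective hrange
  set Blin : (Fin n → ℂ) →ₗ[ℂ] (Fin n → ℂ) := (Tβ ∘ₗ W.subtype) ∘ₗ σ with hBlin
  have hsupp : ∀ u : W, ↑(↑u : ℝ →₀ ℂ).support ⊆ Λ :=
    fun u => (Finsupp.mem_supported ℂ _).1 u.2
  have hkerTβ : ∀ u : ℝ →₀ ℂ, ↑u.support ⊆ Λ → Tα u = 0 → Tβ u = 0 := by
    intro u hu h0
    apply eq_zero_of_cdot_self
    rw [hTβ, ← cdot_lc vA vB hgram _ _ hu hu, ← hTα, h0, cdot_zero_left]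
  have hDβ_eq : ∀ u : W, Blin (Dα u) = Tβ ↑u := by
    intro u
    have h1 : Dα (σ (Dα u)) = Dα u := LinearMap.congr_fun hσ (Dα u)
    have h1' : Tα ↑(σ (Dα u)) = Tα ↑u := h1
    have hmem : ((σ (Dα u) : ℝ →₀ ℂ) - (↑u : ℝ →₀ ℂ)) ∈ W := W.sub_mem (σ (Dα u)).2 u.2
    have h2 : Tα ((σ (Dα u) : ℝ →₀ ℂ) - ↑u) = 0 := by
      rw [map_sub, h1', sub_self]
    have h4 := hkerTβ _ ((Finsupp.mem_supported ℂ _).1 hmem) h2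
    rw [map_sub, sub_eq_zero] at h4
    show Tβ ↑(σ (Dα u)) = Tβ ↑u
    exact h4
  set B : Matrix (Fin n) (Fin n) ℂ := LinearMap.toMatrix' Blin with hB
  have hmulVec : ∀ v, B.mulVec v = Blin v := by
    intro v
    rw [← Matrix.toLin'_apply, hB, Matrix.toLin'_toMatrix']
  have hprop : ∀ l ∈ Λ, B.mulVec (vA l) = vB l := by
    intro l hl
    rw [hmulVec]
    have hu : (Finsupp.single l 1 : ℝ →₀ ℂ) ∈ W := Finsupp.single_mem_supported ℂ 1 hl
    have h5 := hDβ_eq ⟨_, hu⟩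
    have hA : Dα ⟨_, hu⟩ = vA l := by
      show Tα (Finsupp.single l 1) = vA l
      rw [hTα, Finsupp.linearCombination_single, one_smul]
    have hBv : Tβ (Finsupp.single l 1) = vB l := by
      rw [hTβ, Finsupp.linearCombination_single, one_smul]
    rw [hA] at h5
    rw [h5]
    exact hBv
  have hiso : ∀ u v : Fin n → ℂ, cdot (B.mulVec u) (B.mulVec v) = cdot u v := by
    intro u v
    have hsurj : Function.Surjective Dα := LinearMap.range_eq_top.1 hrange
    obtain ⟨du, hdu⟩ := hsurj u
    obtain ⟨dv, hdv⟩ := hsurj v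
    have hDT : ∀ x : W, Dα x = Tα ↑x := fun x => rfl
    rw [← hdu, ← hdv, hmulVec, hmulVec, hDβ_eq du, hDβ_eq dv, hDT, hDT, hTα, hTβ,
      ← cdot_lc vA vB hgram _ _ (hsupp du) (hsupp dv)]
  have hU := unitary_of_cdot_preserving hiso
  exact ⟨B, ⟨hU, mul_eq_one_comm.1 hU⟩, hprop⟩

/-- Uniqueness of the boundary matrix. -/
lemma unique_B (hspanA : Submodule.span ℂ ((fun l : ℝ => fun i => eFun l (a i)) '' Λ) = ⊤)
    {B B' : Matrix (Fin n) (Fin n) ℂ}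
    (hB : ∀ l ∈ Λ, B.mulVec (fun i => eFun l (a i)) = fun i => eFun l (b i))
    (hB' : ∀ l ∈ Λ, B'.mulVec (fun i => eFun l (a i)) = fun i => eFun l (b i)) :
    B = B' := by
  have h : Matrix.toLin' B = Matrix.toLin' B' := by
    apply LinearMap.ext_on hspanA
    rintro x ⟨l, hl, rfl⟩
    rw [Matrix.toLin'_apply, Matrix.toLin'_apply, hB l hl, hB' l hl]
  exact Matrix.toLin'.injective h

end S15
namespace S15

variable {n : ℕ} {a b : Fin n → ℝ} {Λ : Set ℝ}

lemma gram_cdot (hab : EndpointsOrdered a b)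
    (horth : ∀ l ∈ Λ, ∀ l' ∈ Λ, l ≠ l' →
      ∫ x in Omega a b, eFun l x * star (eFun l' x) = 0) :
    ∀ l ∈ Λ, ∀ m ∈ Λ,
      cdot ((fun i => eFun l (a i)) : Fin n → ℂ) (fun i => eFun m (a i))
        = cdot ((fun i => eFun l (b i)) : Fin n → ℂ) (fun i => eFun m (b i)) := by
  intro l hl m hm
  have h := gram_sum hab horth hl hm
  have e : ∀ r : Fin n → ℝ,
      cdot ((fun i => eFun l (r i)) : Fin n → ℂ) (fun i => eFun m (r i))
        = ∑ i, Complex.exp (Kc * (((l - m : ℝ) : ℂ) * ((r i : ℝ) : ℂ))) := by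
    intro r
    unfold cdot
    exact Finset.sum_congr rfl fun i _ => eFun_mul_star l m (r i)
  rw [e a, e b, h]

/-- Any unitary matrix mapping the `a`-boundary vectors to the `b`-boundary vectors is a
spectral boundary matrix. -/
lemma boundary_main (hab : EndpointsOrdered a b) (hspec : IsSpectral a b Λ)
    {B : Matrix (Fin n) (Fin n) ℂ} (hunit : B.conjTranspose * B = 1)
    (hprop : ∀ l ∈ Λ, B.mulVec (fun i => eFun l (a i)) = fun i => eFun l (b i)) :
    IsSpectralBoundary a b B := by
  intro l₀ c hsol
  rcases Nat.eq_zero_or_pos n with hn | hn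
  · exact ⟨0, funext fun i => absurd i.isLt (by omega)⟩
  haveI : Nonempty (Fin n) := ⟨⟨0, hn⟩⟩
  have hdiag : ∀ (r : Fin n → ℝ) (w : Fin n → ℂ),
      (expDiag fun i => (l₀ : ℂ) * ((r i : ℝ) : ℂ)).mulVec w
        = fun i => eFun l₀ (r i) * w i := by
    intro r w
    funext i
    rw [expDiag, Matrix.mulVec_diagonal, eFun_eq, Kc_def]
  have hsol' : B.mulVec (fun i => eFun l₀ (a i) * c i) = fun i => eFun l₀ (b i) * c i := by
    rw [← hdiag a c, ← hdiag b c]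
    exact hsol
  have key : ∀ (w : Fin n → ℂ),
      B.mulVec (fun i => eFun l₀ (a i) * w i) = (fun i => eFun l₀ (b i) * w i) →
      ∀ l ∈ Λ,
        ∑ i, w i * Complex.exp (Kc * (((l₀ - l : ℝ) : ℂ) * ((b i : ℝ) : ℂ)))
          = ∑ i, w i * Complex.exp (Kc * (((l₀ - l : ℝ) : ℂ) * ((a i : ℝ) : ℂ))) := by
    intro w hw l hl
    have e1 : ∀ r : Fin n → ℝ,
        cdot (fun i => eFun l₀ (r i) * w i) (fun i => eFun l (r i))
          = ∑ i, w i * Complex.exp (Kc * (((l₀ - l : ℝ) : ℂ) * ((r i : ℝ) : ℂ))) := by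
      intro r
      unfold cdot
      refine Finset.sum_congr rfl fun i _ => ?_
      show eFun l₀ (r i) * w i * star (eFun l (r i))
          = w i * Complex.exp (Kc * (((l₀ - l : ℝ) : ℂ) * ((r i : ℝ) : ℂ)))
      rw [mul_comm (eFun l₀ (r i)) (w i), mul_assoc, eFun_mul_star]
    calc ∑ i, w i * Complex.exp (Kc * (((l₀ - l : ℝ) : ℂ) * ((b i : ℝ) : ℂ)))
        = cdot (fun i => eFun l₀ (b i) * w i) (fun i => eFun l (b i)) := (e1 b).symm
      _ = cdot (B.mulVec fun i => eFun l₀ (a i) * w i) (B.mulVec fun i => eFun l (a i)) := by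
          rw [hw, hprop l hl]
      _ = cdot (fun i => eFun l₀ (a i) * w i) (fun i => eFun l (a i)) :=
          cdot_mulVec_of_unitary hunit _ _
      _ = ∑ i, w i * Complex.exp (Kc * (((l₀ - l : ℝ) : ℂ) * ((a i : ℝ) : ℂ))) := e1 a
  have main : ∀ c' : Fin n → ℂ,
      (∀ l ∈ Λ,
        ∑ i, c' i * Complex.exp (Kc * (((l₀ - l : ℝ) : ℂ) * ((b i : ℝ) : ℂ)))
          = ∑ i, c' i * Complex.exp (Kc * (((l₀ - l : ℝ) : ℂ) * ((a i : ℝ) : ℂ)))) →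
      (l₀ ∈ Λ → ∑ i, c' i * (((b i - a i : ℝ)) : ℂ) = 0) →
      ∀ i, c' i = 0 := by
    intro c' hkey hzs
    have hint : ∀ l ∈ Λ, ∫ x in Omega a b, star (eFun l x) * pcw a b c' l₀ x = 0 := by
      intro l hl
      rw [integral_conj_eFun_mul_pcw a b c' l₀ l (fun i => (hab.1 i).le)
        (fun i => Ioo_subset_Omega i)]
      by_cases hll : l₀ - l = 0
      · have hEq : l₀ = l := sub_eq_zero.1 hll
        have hl₀ : l₀ ∈ Λ := by rwa [hEq]
        simp_rw [hll, intervalIntegral_expKc_zero]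
        exact hzs hl₀
      · simp_rw [intervalIntegral_expKc_ne _ _ hll]
        have hstep : ∀ i, c' i * ((Complex.exp (Kc * (((l₀ - l : ℝ) : ℂ) * ((b i : ℝ) : ℂ)))
              - Complex.exp (Kc * (((l₀ - l : ℝ) : ℂ) * ((a i : ℝ) : ℂ)))) / (Kc * ((l₀ - l : ℝ) : ℂ)))
            = (c' i * Complex.exp (Kc * (((l₀ - l : ℝ) : ℂ) * ((b i : ℝ) : ℂ)))
              - c' i * Complex.exp (Kc * (((l₀ - l : ℝ) : ℂ) * ((a i : ℝ) : ℂ)))) / (Kc * ((l₀ - l : ℝ) : ℂ)) := by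
          intro i; ring
        simp_rw [hstep]
        rw [← Finset.sum_div, Finset.sum_sub_distrib, hkey l hl, sub_self, zero_div]
    have hae := ae_zero_of_orthogonal hspec.2 _ (memLp_pcw a b c' l₀) hint
    exact pcw_ae_zero_coeffs hab a b c' l₀ hab.1 (fun i => subset_rfl) hae
  by_cases hl₀ : l₀ ∈ Λ
  · set L : ℝ := ∑ i, (b i - a i) with hLdef
    have hL : 0 < L := Finset.sum_pos (fun i _ => sub_pos.2 (hab.1 i)) Finset.univ_nonempty
    set t : ℂ := (∑ i, c i * (((b i - a i : ℝ)) : ℂ)) / ((L : ℝ) : ℂ) with ht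
    have h1 : ∀ i, c i - t = 0 := by
      apply main fun i => c i - t
      · intro l hl
        have hc := key c hsol' l hl
        have hone := gram_sum hab hspec.1 hl₀ hl
        simp_rw [sub_mul]
        rw [Finset.sum_sub_distrib, Finset.sum_sub_distrib, ← Finset.mul_sum, ← Finset.mul_sum,
          hc, hone]
      · intro _
        simp_rw [sub_mul]
        rw [Finset.sum_sub_distrib, ← Finset.mul_sum]
        have hsumL : ∑ i, (((b i - a i : ℝ)) : ℂ) = ((L : ℝ) : ℂ) := by
          rw [hLdef]; push_cast; ring
        rw [hsumL, ht, div_mul_cancel₀, sub_self]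
        exact Complex.ofReal_ne_zero.2 hL.ne'
    exact ⟨t, funext fun i => sub_eq_zero.1 (h1 i)⟩
  · have h1 : ∀ i, c i = 0 := main c (key c hsol') (fun h => absurd h hl₀)
    exact ⟨0, funext fun i => h1 i⟩

end S15

/-- if `Ω` is spectral with spectrum `Λ`, then the boundary vectors
`e_λ(α⃗)` and `e_λ(β⃗)`, `λ ∈ Λ`, span `ℂⁿ`, there is a unique unitary matrix `B` with
`B e_λ(α⃗) = e_λ(β⃗)` for all `λ ∈ Λ`, and this `B` is a spectral boundary matrix. -/
theorem stmt_15 (n : ℕ) (a b : Fin n → ℝ) (hab : EndpointsOrdered a b)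
    (Λ : Set ℝ) (hspec : IsSpectral a b Λ) :
    Submodule.span ℂ ((fun l : ℝ => fun i => eFun l (a i)) '' Λ) = ⊤ ∧
    Submodule.span ℂ ((fun l : ℝ => fun i => eFun l (b i)) '' Λ) = ⊤ ∧
    (∃! B : Matrix (Fin n) (Fin n) ℂ,
      (B.conjTranspose * B = 1 ∧ B * B.conjTranspose = 1) ∧
      ∀ l ∈ Λ, B.mulVec (fun i => eFun l (a i)) = fun i => eFun l (b i)) ∧
    (∀ B : Matrix (Fin n) (Fin n) ℂ,
      (B.conjTranspose * B = 1 ∧ B * B.conjTranspose = 1) →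
      (∀ l ∈ Λ, B.mulVec (fun i => eFun l (a i)) = fun i => eFun l (b i)) →
      IsSpectralBoundary a b B) := by
  have htriv : n = 0 → ∀ S : Set (Fin n → ℂ), Submodule.span ℂ S = ⊤ := by
    intro h0 S
    refine Submodule.eq_top_iff'.2 fun x => ?_
    have hx : x = 0 := funext fun i => absurd i.isLt (by omega)
    rw [hx]
    exact Submodule.zero_mem _
  have hspanA : Submodule.span ℂ ((fun l : ℝ => fun i => eFun l (a i)) '' Λ) = ⊤ ∧
      Submodule.span ℂ ((fun l : ℝ => fun i => eFun l (b i)) '' Λ) = ⊤ := by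
    rcases Nat.eq_zero_or_pos n with h0 | hpos
    · exact ⟨htriv h0 _, htriv h0 _⟩
    haveI : Nonempty (Fin n) := ⟨⟨0, hpos⟩⟩
    set ε : ℝ := Finset.univ.inf' Finset.univ_nonempty (fun j => b j - a j) with hε
    have hεpos : 0 < ε := (Finset.lt_inf'_iff _).2 fun j _ => sub_pos.2 (hab.1 j)
    have hεle : ∀ j, ε ≤ b j - a j := fun j => Finset.inf'_le _ (Finset.mem_univ j)
    constructor
    · refine S15.span_eVec_eq_top hab hspec a 0 ε hεpos fun i => ?_
      intro x hx
      constructor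
      · linarith [hx.1]
      · linarith [hx.2, hεle i]
    · refine S15.span_eVec_eq_top hab hspec b (-ε) 0 (by linarith) fun i => ?_
      intro x hx
      constructor
      · linarith [hx.1, hεle i]
      · linarith [hx.2]
  have hgram := S15.gram_cdot hab hspec.1
  obtain ⟨B, hBu, hBp⟩ := S15.exists_unitary hgram hspanA.1
  refine ⟨hspanA.1, hspanA.2, ⟨B, ⟨hBu, hBp⟩, ?_⟩, ?_⟩
  · rintro B' ⟨_, hB'p⟩
    exact S15.unique_B hspanA.1 hB'p hBp
  · intro B' hB'u hB'p
    exact S15.boundary_main hab hspec hB'u.1 hB'p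
end
end

section
/- Assume Ω is spectral with spectrum Λ, and for each t ∈ ℝ let U(t) be a unitary operator on L²(Ω) satisfying U(t) e_λ = e^{2πiλt} e_λ for all λ ∈ Λ. Then (U(t))_{t∈ℝ} is a unitary group of local translations: for every f ∈ L²(Ω) and every t ∈ ℝ, (U(t)f)(x) = f(x+t) for almost every x ∈ Ω ∩ (Ω − t). -/
open MeasureTheory Complex Filter

noncomputable section

/-- Restriction (mono-measure) continuous linear map between `L²` spaces. -/
noncomputable def restrCLM {μ ν : Measure ℝ} (h : ν ≤ μ) :
    Lp ℂ 2 μ →L[ℂ] Lp ℂ 2 ν :=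
  LinearMap.mkContinuous
    { toFun := fun F => ((Lp.memLp F).mono_measure h).toLp ⇑F
      map_add' := fun F G => by
        rw [← MemLp.toLp_add]
        exact MemLp.toLp_congr _ _ ((Lp.coeFn_add F G).filter_mono (ae_mono h))
      map_smul' := fun c F => by
        simp only [RingHom.id_apply]
        rw [← MemLp.toLp_const_smul]
        exact MemLp.toLp_congr _ _ ((Lp.coeFn_smul c F).filter_mono (ae_mono h)) }
    1 (fun F => by
      rw [one_mul]
      simp only [LinearMap.coe_mk, AddHom.coe_mk]
      rw [Lp.norm_toLp, Lp.norm_def]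
      exact ENNReal.toReal_mono (Lp.eLpNorm_ne_top F)
        (eLpNorm_mono_measure _ h))

theorem restrCLM_coeFn {μ ν : Measure ℝ} (h : ν ≤ μ) (F : Lp ℂ 2 μ) :
    ⇑(restrCLM h F) =ᵐ[ν] ⇑F :=
  MemLp.coeFn_toLp ((Lp.memLp F).mono_measure h)

theorem eFun_shift (l t x : ℝ) :
    eFun l (x + t) = Complex.exp (2 * (Real.pi : ℂ) * Complex.I * l * t) * eFun l x := by
  simp only [eFun, ← Complex.exp_add]
  congr 1
  push_cast
  ring


/-- Auxiliary: local-translation property extends from a spanning set to all of `L²`. -/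
theorem aux_loc (μ : Measure ℝ) (hle : μ ≤ volume) (Ω' : Set ℝ) (t : ℝ)
    (hmp : MeasurePreserving (fun x => x + t) (volume.restrict Ω') μ)
    (V : Lp ℂ 2 μ ≃ₗᵢ[ℂ] Lp ℂ 2 μ) (S : Set (Lp ℂ 2 μ))
    (hdense : (Submodule.span ℂ S).topologicalClosure = ⊤)
    (hgen : ∀ G ∈ S, ∀ᵐ x ∂(μ.restrict Ω'), ⇑(V G) x = ⇑G (x + t)) :
    ∀ F : Lp ℂ 2 μ, ∀ᵐ x ∂(μ.restrict Ω'), ⇑(V F) x = ⇑F (x + t) := by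
  have h1 : μ.restrict Ω' ≤ μ := Measure.restrict_le_self
  have h2 : μ.restrict Ω' ≤ volume.restrict Ω' :=
    Measure.restrict_mono subset_rfl hle
  let T : Lp ℂ 2 μ →ₗᵢ[ℂ] Lp ℂ 2 (volume.restrict Ω') :=
    Lp.compMeasurePreservingₗᵢ ℂ (fun x => x + t) hmp
  let Φ : Lp ℂ 2 μ →L[ℂ] Lp ℂ 2 (μ.restrict Ω') :=
    (restrCLM h1).comp V.toLinearIsometry.toContinuousLinearMap
      - (restrCLM h2).comp T.toContinuousLinearMap
  have hΦcoe : ∀ G : Lp ℂ 2 μ, Φ G = restrCLM h1 (V G) - restrCLM h2 (T G) :=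
    fun G => rfl
  have hTcoe : ∀ G : Lp ℂ 2 μ, ⇑(T G) =ᵐ[μ.restrict Ω'] fun x => ⇑G (x + t) := fun G =>
    (Lp.coeFn_compMeasurePreserving G hmp).filter_mono (ae_mono h2)
  have hiff : ∀ G : Lp ℂ 2 μ, Φ G = 0 ↔ restrCLM h1 (V G) = restrCLM h2 (T G) := fun G => by
    rw [hΦcoe, sub_eq_zero]
  have hzero : ∀ G ∈ S, Φ G = 0 := by
    intro G hG
    rw [hiff]
    refine Lp.ext ?_
    filter_upwards [restrCLM_coeFn h1 (V G), restrCLM_coeFn h2 (T G), hTcoe G, hgen G hG]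
      with x e1 e2 e3 e4
    rw [e1, e2, e3, e4]
  have hker : Submodule.span ℂ S ≤ Φ.ker :=
    Submodule.span_le.2 fun G hG => by exact LinearMap.mem_ker.2 (hzero G hG)
  have htop : (⊤ : Submodule ℂ (Lp ℂ 2 μ)) ≤ Φ.ker := by
    rw [← hdense]
    exact Submodule.topologicalClosure_minimal _ hker (ContinuousLinearMap.isClosed_ker Φ)
  intro F
  have h0 : restrCLM h1 (V F) = restrCLM h2 (T F) :=
    (hiff F).1 (htop Submodule.mem_top)
  have hae : ⇑(restrCLM h1 (V F)) =ᵐ[μ.restrict Ω'] ⇑(restrCLM h2 (T F)) := by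
    rw [h0]
  filter_upwards [restrCLM_coeFn h1 (V F), restrCLM_coeFn h2 (T F), hTcoe F, hae]
    with x e1 e2 e3 e4
  rw [← e1, ← e3, ← e2, e4]

set_option maxHeartbeats 2000000 in
/-- if `Ω` is spectral with spectrum `Λ` and `U(t)` are unitaries with
`U(t) e_λ = e^{2πiλt} e_λ`, then `U` is a unitary group of local translations. -/
theorem stmt_18 (n : ℕ) (a b : Fin n → ℝ) (hab : EndpointsOrdered a b)
    (Λ : Set ℝ) (hspec : IsSpectral a b Λ)
    (U : ℝ → (Lp ℂ 2 (volume.restrict (Omega a b)) ≃ₗᵢ[ℂ] Lp ℂ 2 (volume.restrict (Omega a b))))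
    (hU : ∀ t : ℝ, ∀ l ∈ Λ, ∀ F : Lp ℂ 2 (volume.restrict (Omega a b)),
      ⇑F =ᵐ[volume.restrict (Omega a b)] eFun l →
      ⇑(U t F) =ᵐ[volume.restrict (Omega a b)]
        fun x => Complex.exp (2 * (Real.pi : ℂ) * Complex.I * l * t) * eFun l x) :
    ∀ (t : ℝ) (F : Lp ℂ 2 (volume.restrict (Omega a b))),
      ∀ᵐ x ∂(volume.restrict (Omega a b)),
        x + t ∈ Omega a b → ⇑(U t F) x = ⇑F (x + t) := by
  intro t F
  have hΩmeas : MeasurableSet (Omega a b) :=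
    (isOpen_iUnion fun i => isOpen_Ioo).measurableSet
  have hΩ'meas : MeasurableSet ((fun x => x + t) ⁻¹' (Omega a b)) :=
    hΩmeas.preimage (measurable_add_const t)
  have hmp : MeasurePreserving (fun x => x + t)
      (volume.restrict ((fun x => x + t) ⁻¹' (Omega a b))) (volume.restrict (Omega a b)) :=
    (measurePreserving_add_right volume t).restrict_preimage hΩmeas
  have hgen : ∀ G ∈ {G : Lp ℂ 2 (volume.restrict (Omega a b)) |
        ∃ l ∈ Λ, ⇑G =ᵐ[volume.restrict (Omega a b)] eFun l},
      ∀ᵐ x ∂((volume.restrict (Omega a b)).restrict ((fun x => x + t) ⁻¹' (Omega a b))),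
        ⇑(U t G) x = ⇑G (x + t) := by
    rintro G ⟨l, hl, hGl⟩
    have e1 := (hU t l hl G hGl).filter_mono (ae_mono (Measure.restrict_le_self (s := (fun x => x + t) ⁻¹' (Omega a b))))
    have e2 : ∀ᵐ x ∂((volume.restrict (Omega a b)).restrict ((fun x => x + t) ⁻¹' (Omega a b))),
        ⇑G (x + t) = eFun l (x + t) := by
      have h3 : ∀ᵐ x ∂(volume.restrict ((fun x => x + t) ⁻¹' (Omega a b))),
          ⇑G (x + t) = eFun l (x + t) :=
        hmp.quasiMeasurePreserving.tendsto_ae.eventually hGl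
      exact h3.filter_mono (ae_mono (Measure.restrict_mono subset_rfl Measure.restrict_le_self))
    filter_upwards [e1, e2] with x e1 e2
    rw [e1, e2, eFun_shift]
  have key := aux_loc (volume.restrict (Omega a b)) Measure.restrict_le_self
    ((fun x => x + t) ⁻¹' (Omega a b)) t hmp (U t) _ hspec.2 hgen F
  exact (ae_restrict_iff' hΩ'meas).1 key
end
end
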